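/- arXiv:2311.06793 — 8 statements merged into one kernel-verified Lean document; each statement's English description precedes it below -/
import Mathlib

section
/- For every n ≥ 1, every a ∈ ℤⁿ and every m ≥ 1, the rational number F(m,a) is an integer. -/
/-!
Let `t j = ∑ᵢ (-θᵢ) ^ j`. By Euler's product formula `F(m, a) = (1 / m) ∑_{j ∣ m} φ(m / j) t j`,
so `m` has to divide this sum.

The `t j` satisfy the Dwork congruences `t (p ^ (k + 1) c) ≡ t (p ^ k c) mod p ^ (k + 1)`. Since
the elementary symmetric functions of the `-θᵢ` are integers, evaluation at them is a ring map
`ev` from symmetric polynomials over `ℤ` to `ℤ` with `ev (∑ Xᵢ ^ j) = t j`. On symmetric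
polynomials the substitution `ψ : Xᵢ ↦ Xᵢ ^ p` lifts Frobenius (`ψ u ≡ u ^ p mod p`) and sends
`∑ Xᵢ ^ j` to `∑ Xᵢ ^ (p j)`; induction on `k`, using Fermat's little theorem and
`A ≡ B mod p ^ k → A ^ p ≡ B ^ p mod p ^ (k + 1)`, gives `ev (ψ^(k+1) u) ≡ ev (ψ^k u)`
modulo `p ^ (k + 1)`.

For `e = p ^ a u` with `p ∤ u`, only the divisors `d` and `p d` with `d ∣ u` contribute to the
Möbius transform `∑_{d ∣ e} μ d t (e / d)`, which is therefore a combination of the differences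
`t (p ^ a c) - t (p ^ (a - 1) c)` and divisible by `p ^ a`; hence `e` divides it. Finally
`φ = μ * id` writes `∑_{j ∣ m} φ(m / j) t j` as `∑_{d e = m} d · ∑_{d' ∣ e} μ d' t (e / d')`.
-/

open Polynomial

/-- The sum of `j`-th powers of the roots (with multiplicity, in `ℂ`) of
`Xⁿ − a₁Xⁿ⁻¹ + a₂Xⁿ⁻² − ⋯ + (−1)ⁿaₙ`. -/
noncomputable def rootPowerSum (n : ℕ) (a : Fin n → ℤ) (j : ℕ) : ℂ :=
  ((Polynomial.roots
      (X ^ n + ∑ i : Fin n, C ((-1 : ℂ) ^ ((i : ℕ) + 1) * (a i : ℂ)) * X ^ (n - ((i : ℕ) + 1)))).map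
    (fun θ => θ ^ j)).sum

/-- `F(m,a) = Σ_{j ∣ m} (−1)ʲ (sⱼ/j) Π_{p ∣ m/j} (1 − 1/p)`, where `s j` is the `j`-th
power sum of the roots (given here as an abstract integer-valued function). -/
noncomputable def Fval (s : ℕ → ℤ) (m : ℕ) : ℚ :=
  ∑ j ∈ m.divisors,
    (-1 : ℚ) ^ j * (s j : ℚ) / (j : ℚ) *
      ∏ p ∈ (m / j).primeFactors, (1 - 1 / (p : ℚ))

open Finset
open scoped Nat

def DworkCongruence (t : ℕ → ℤ) : Prop :=
  ∀ p k c : ℕ, p.Prime → (p : ℤ) ^ (k + 1) ∣ t (p ^ (k + 1) * c) - t (p ^ k * c)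

section Moebius

open ArithmeticFunction
open scoped ArithmeticFunction.Moebius ArithmeticFunction.zeta

theorem Nat.Prime.sum_divisors_pow_moebius_mul {p a : ℕ} (hp : p.Prime) (ha : a ≠ 0)
    (g : ℕ → ℤ) : ∑ x ∈ (p ^ a).divisors, μ x * g x = g 1 - g p := by
  obtain ⟨a, rfl⟩ := Nat.exists_eq_add_one_of_ne_zero ha
  have hvanish : ∀ i ∈ range a, μ (p ^ (i + 1 + 1)) * g (p ^ (i + 1 + 1)) = 0 := fun i _ => by
    rw [moebius_apply_prime_pow hp (by omega), if_neg (by omega), zero_mul]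
  rw [Nat.sum_divisors_prime_pow hp, sum_range_succ', sum_range_succ', sum_eq_zero hvanish,
    pow_one, pow_zero, moebius_apply_prime hp, moebius_apply_one]
  ring

namespace DworkCongruence

variable {t : ℕ → ℤ}

theorem pow_dvd_sum_moebius_mul (ht : DworkCongruence t) {p u : ℕ} (hp : p.Prime)
    (hpu : ¬p ∣ u) (a : ℕ) :
    (p : ℤ) ^ a ∣ ∑ d ∈ (p ^ a * u).divisors, μ d * t (p ^ a * u / d) := by
  obtain rfl | ha := eq_or_ne a 0
  · simp
  have hcop : (p ^ a).Coprime u := (hp.coprime_iff_not_dvd.2 hpu).pow_left a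
  rw [Nat.divisors_mul, mul_def, sum_image hcop.mul_injOn_divisors, sum_product_right]
  refine dvd_sum fun y hy => ?_
  have hsplit : ∀ x ∈ (p ^ a).divisors,
      μ (x * y) * t (p ^ a * u / (x * y)) = μ y * (μ x * t (p ^ a / x * (u / y))) := by
    intro x hx
    rw [isMultiplicative_moebius.map_mul_of_coprime
      ((hcop.coprime_dvd_left (Nat.dvd_of_mem_divisors hx)).coprime_dvd_right
        (Nat.dvd_of_mem_divisors hy)),
      Nat.div_mul_div_comm (Nat.dvd_of_mem_divisors hx) (Nat.dvd_of_mem_divisors hy)]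
    ring
  rw [sum_congr rfl hsplit, ← mul_sum, hp.sum_divisors_pow_moebius_mul ha]
  obtain ⟨k, rfl⟩ := Nat.exists_eq_add_one_of_ne_zero ha
  rw [Nat.div_one, pow_succ p k, Nat.mul_div_cancel _ hp.pos, ← pow_succ]
  exact dvd_mul_of_dvd_right (ht p k (u / y) hp) _

theorem dvd_sum_moebius_mul (ht : DworkCongruence t) (e : ℕ) :
    (e : ℤ) ∣ ∑ d ∈ e.divisors, μ d * t (e / d) := by
  obtain rfl | he := eq_or_ne e 0
  · simp
  rw [Int.natCast_dvd, Nat.dvd_iff_prime_pow_dvd_dvd]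
  intro p k hp hpk
  have hpa := ht.pow_dvd_sum_moebius_mul hp (Nat.not_dvd_ordCompl hp he) (e.factorization p)
  rw [Nat.ordProj_mul_ordCompl_eq_self] at hpa
  rw [← Int.natCast_dvd, Nat.cast_pow]
  exact (pow_dvd_pow _ ((hp.pow_dvd_iff_le_factorization he).1 hpk)).trans hpa

theorem dvd_sum_totient_mul (ht : DworkCongruence t) (m : ℕ) :
    (m : ℤ) ∣ ∑ j ∈ m.divisors, (φ (m / j) : ℤ) * t j := by
  let T : ArithmeticFunction ℤ := ⟨fun j => if j = 0 then 0 else t j, if_pos rfl⟩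
  let Φ : ArithmeticFunction ℤ := ⟨fun n => φ n, by simp⟩
  have hT : ∀ {e d : ℕ}, d ∈ e.divisors → T (e / d) = t (e / d) := fun hd =>
    if_neg ((Nat.div_ne_zero_iff_of_dvd (Nat.dvd_of_mem_divisors hd)).2
      ⟨(Nat.mem_divisors.1 hd).2, (Nat.pos_of_mem_divisors hd).ne'⟩)
  have hΦ : ∀ n, (Φ * ζ) n = n := fun n => by
    conv_rhs => rw [← Nat.sum_totient n, Nat.cast_sum]
    exact coe_mul_zeta_apply
  have hA : ∀ e, ((μ : ArithmeticFunction ℤ) * T) e = ∑ d ∈ e.divisors, μ d * t (e / d) :=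
    fun e => by
      rw [mul_apply, Nat.sum_divisorsAntidiagonal (fun a b => μ a * T b)]
      exact sum_congr rfl fun d hd => by rw [hT hd]
  have hsum : ∑ j ∈ m.divisors, (φ (m / j) : ℤ) * t j = (Φ * T) m := by
    rw [mul_apply, Nat.sum_divisorsAntidiagonal' (fun a b => Φ a * T b)]
    refine sum_congr rfl fun j hj => ?_
    rw [show T j = t j from if_neg (Nat.pos_of_mem_divisors hj).ne']
    rfl
  -- `Φ * T = (Φ * ζ) * (μ * T)`
  rw [hsum, ← one_mul T, ← coe_zeta_mul_moebius, mul_assoc, ← mul_assoc Φ, mul_apply]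
  refine dvd_sum fun x hx => ?_
  rw [hΦ, hA, ← (Nat.mem_divisorsAntidiagonal.1 hx).1, Nat.cast_mul]
  exact mul_dvd_mul_left _ (ht.dvd_sum_moebius_mul x.2)

end DworkCongruence

end Moebius

theorem pow_succ_dvd_pow_sub_pow {R : Type*} [CommRing R] {p k : ℕ} {a b : R}
    (h : (p : R) ^ (k + 1) ∣ a - b) : (p : R) ^ (k + 2) ∣ a ^ p - b ^ p := by
  rw [← geom_sum₂_mul, pow_succ']
  exact mul_dvd_mul (dvd_geom_sum₂_self ((dvd_pow_self _ k.succ_ne_zero).trans h)) h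

theorem pow_succ_dvd_map_pow_succ_apply_sub {S : Type*} [CommRing S] {p : ℕ} (hp : p.Prime)
    (ψ : S →+* S) (hψ : ∀ u, (p : S) ∣ ψ u - u ^ p) (ev : S →+* ℤ) (k : ℕ) (u : S) :
    (p : ℤ) ^ (k + 1) ∣ ev ((ψ ^ (k + 1)) u) - ev ((ψ ^ k) u) := by
  induction k generalizing u with
  | zero =>
    have hlift : (p : ℤ) ∣ ev (ψ u) - ev u ^ p := by simpa using map_dvd ev (hψ u)
    simpa using dvd_add hlift (Int.prime_dvd_pow_self_sub hp (ev u))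
  | succ k ih =>
    obtain ⟨v, hv⟩ := hψ u
    have hstep : ∀ j, ev ((ψ ^ (j + 1)) u) = ev ((ψ ^ j) u) ^ p + p * ev ((ψ ^ j) v) := fun j => by
      rw [pow_succ, RingHom.coe_mul, Function.comp_apply, eq_add_of_sub_eq' hv]
      simp only [map_add, map_mul, map_pow, map_natCast]
    have hdiff : ev ((ψ ^ (k + 2)) u) - ev ((ψ ^ (k + 1)) u) =
        (ev ((ψ ^ (k + 1)) u) ^ p - ev ((ψ ^ k) u) ^ p) +
          p * (ev ((ψ ^ (k + 1)) v) - ev ((ψ ^ k) v)) := by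
      linear_combination hstep (k + 1) - hstep k
    rw [hdiff]
    exact dvd_add (pow_succ_dvd_pow_sub_pow (ih u))
      (pow_succ' (p : ℤ) (k + 1) ▸ mul_dvd_mul_left _ (ih v))

namespace MvPolynomial

variable {σ : Type*}

theorem IsSymmetric.expand {R : Type*} [CommSemiring R] {f : MvPolynomial σ R}
    (hf : f.IsSymmetric) (p : ℕ) : (expand p f).IsSymmetric := fun e => by
  rw [rename_expand, hf e]

theorem IsSymmetric.of_C_mul {R : Type*} [CommRing R] [IsDomain R] {r : R} (hr : r ≠ 0)
    {f : MvPolynomial σ R} (h : (MvPolynomial.C r * f).IsSymmetric) : f.IsSymmetric := fun e =>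
  mul_left_cancel₀ (C_ne_zero.2 hr) (by rw [← h e, map_mul, rename_C])

theorem C_dvd_expand_sub_pow {p : ℕ} (hp : p.Prime) (f : MvPolynomial σ ℤ) :
    C (p : ℤ) ∣ expand p f - f ^ p := by
  have := Fact.mk hp
  rw [C_dvd_iff_zmod, map_sub, map_expand, map_pow, expand_zmod, sub_self]

theorem expand_psum (R : Type*) [CommSemiring R] [Fintype σ] (p j : ℕ) :
    expand p (psum σ R j) = psum σ R (p * j) := by
  simp only [psum, map_sum, map_pow, expand_X, ← pow_mul]

variable (σ) in
noncomputable def symmetricExpand (R : Type*) [CommSemiring R] (p : ℕ) :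
    symmetricSubalgebra σ R →ₐ[R] symmetricSubalgebra σ R :=
  ((expand p).comp (symmetricSubalgebra σ R).val).codRestrict _ fun f => f.2.expand p

theorem symmetricExpand_iterate_psum (R : Type*) [CommSemiring R] [Fintype σ] (p k j : ℕ) :
    (symmetricExpand σ R p)^[k] ⟨psum σ R j, psum_isSymmetric σ R j⟩ =
      ⟨psum σ R (p ^ k * j), psum_isSymmetric σ R _⟩ := by
  induction k with
  | zero => simp
  | succ k ih =>
    rw [Function.iterate_succ_apply', ih]
    exact Subtype.ext ((expand_psum R p _).trans (by rw [pow_succ', mul_assoc]))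

theorem dvd_symmetricExpand_sub_pow {p : ℕ} (hp : p.Prime) (f : symmetricSubalgebra σ ℤ) :
    (p : symmetricSubalgebra σ ℤ) ∣ symmetricExpand σ ℤ p f - f ^ p := by
  obtain ⟨g, hg⟩ := C_dvd_expand_sub_pow hp f.1
  have hg_symm : g.IsSymmetric :=
    IsSymmetric.of_C_mul (Nat.cast_ne_zero.2 hp.ne_zero) (hg ▸ (symmetricExpand σ ℤ p f - f ^ p).2)
  exact ⟨⟨g, hg_symm⟩, Subtype.ext hg⟩

theorem exists_ringHom_int_eq_aeval {σ R : Type*} [Fintype σ] [CommRing R] (θ : σ → R)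
    (h : ∀ k, ∃ b : ℤ, aeval θ (esymm σ ℤ k) = b) :
    ∃ ev : symmetricSubalgebra σ ℤ →+* ℤ, ∀ f, (ev f : R) = aeval θ (f : MvPolynomial σ ℤ) := by
  choose b hb using h
  let E := esymmAlgEquiv σ ℤ (rfl : Fintype.card σ = _)
  let ev := (aeval fun i : Fin (Fintype.card σ) => b (i + 1)).comp E.symm.toAlgHom
  have hcomp : (Algebra.ofId ℤ R).comp (ev.comp E.toAlgHom) =
      (aeval θ).comp ((symmetricSubalgebra σ ℤ).val.comp E.toAlgHom) := by
    refine algHom_ext fun i => ?_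
    have hX : (E (X i) : MvPolynomial σ ℤ) = esymm σ ℤ (i + 1) := by
      simp [E, esymmAlgHom_apply]
    simp [ev, hX, hb]
  refine ⟨ev.toRingHom, fun f => ?_⟩
  obtain ⟨q, rfl⟩ := E.surjective f
  exact congr($hcomp q)

end MvPolynomial

theorem Multiset.exists_dworkCongruence_powerSum {R : Type*} [CommRing R] (s : Multiset R)
    (h : ∀ k, ∃ b : ℤ, s.esymm k = b) :
    ∃ t : ℕ → ℤ, (∀ j, (t j : R) = (s.map (· ^ j)).sum) ∧ DworkCongruence t := by
  classical
  open MvPolynomial in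
  obtain ⟨ev, hev⟩ := exists_ringHom_int_eq_aeval (fun x : s => (x : R))
    (by simpa [aeval_esymm_eq_multiset_esymm] using h)
  let P (j : ℕ) : symmetricSubalgebra s ℤ := ⟨psum s ℤ j, psum_isSymmetric s ℤ j⟩
  refine ⟨fun j => ev (P j), fun j => ?_, fun p k c hp => ?_⟩
  · rw [hev, ← s.map_univ_comp_coe]
    simp only [P, psum, map_sum, map_pow, MvPolynomial.aeval_X]
    rfl
  · have := pow_succ_dvd_map_pow_succ_apply_sub hp (symmetricExpand s ℤ p).toRingHom
      (dvd_symmetricExpand_sub_pow hp) ev k (P c)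
    simpa only [P, RingHom.coe_pow, AlgHom.toRingHom_eq_coe, RingHom.coe_coe,
      symmetricExpand_iterate_psum] using this

theorem Polynomial.Monic.exists_esymm_roots_map_eq_int {K : Type*} [Field K] [IsAlgClosed K]
    {P : ℤ[X]} (hP : P.Monic) (k : ℕ) :
    ∃ b : ℤ, (P.map (Int.castRingHom K)).roots.esymm k = b := by
  set Q := P.map (Int.castRingHom K)
  have hQ : Q.Monic := hP.map _
  have hdeg : Q.natDegree = P.natDegree := hP.natDegree_map _
  rcases le_or_gt k P.natDegree with hk | hk
  · refine ⟨(-1) ^ k * P.coeff (P.natDegree - k), ?_⟩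
    have hvieta := coeff_eq_esymm_roots_of_card (IsAlgClosed.card_roots_eq_natDegree (p := Q))
      (hdeg ▸ Nat.sub_le P.natDegree k : P.natDegree - k ≤ Q.natDegree)
    rw [hQ.leadingCoeff, coeff_map, hdeg, Nat.sub_sub_self hk, eq_intCast] at hvieta
    rw [Int.cast_mul, Int.cast_pow, Int.cast_neg, Int.cast_one, hvieta, one_mul, ← mul_assoc,
      ← mul_pow, neg_one_mul, neg_neg, one_pow, one_mul]
  · refine ⟨0, ?_⟩
    rw [Multiset.esymm, Multiset.powersetCard_eq_empty]
    · simp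
    · rwa [IsAlgClosed.card_roots_eq_natDegree, hdeg]

theorem exists_dworkCongruence_neg_pow_mul_rootPowerSum (n : ℕ) (a : Fin n → ℤ) :
    ∃ t : ℕ → ℤ, (∀ j, (t j : ℂ) = (-1) ^ j * rootPowerSum n a j) ∧ DworkCongruence t := by
  set P : ℤ[X] := X ^ n + ∑ i : Fin n, C ((-1) ^ ((i : ℕ) + 1) * a i) * X ^ (n - ((i : ℕ) + 1))
  have hP : P.Monic := by
    refine monic_X_pow_add ((degree_sum_le _ _).trans_lt ?_)
    refine (Finset.sup_lt_iff (WithBot.bot_lt_coe n)).2 fun i _ => ?_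
    exact (degree_C_mul_X_pow_le _ _).trans_lt
      (WithBot.coe_lt_coe.2 (by omega : n - ((i : ℕ) + 1) < n))
  have hmap : rootPowerSum n a = fun j => ((P.map (Int.castRingHom ℂ)).roots.map (· ^ j)).sum := by
    ext j
    simp [rootPowerSum, P, Polynomial.map_sum]
  obtain ⟨t, ht, hdw⟩ := Multiset.exists_dworkCongruence_powerSum
    ((P.map (Int.castRingHom ℂ)).roots.map Neg.neg) fun k => by
      obtain ⟨b, hb⟩ := hP.exists_esymm_roots_map_eq_int (K := ℂ) k
      exact ⟨(-1) ^ k * b, by simp [Multiset.esymm_neg, hb]⟩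
  refine ⟨t, fun j => ?_, hdw⟩
  rw [ht, hmap, Multiset.map_map, ← Multiset.sum_map_mul_left]
  exact congrArg _ (Multiset.map_congr rfl fun x _ => neg_pow x j)

theorem Fval_eq_sum_totient_mul_div (s : ℕ → ℤ) (m : ℕ) :
    Fval s m = (∑ j ∈ m.divisors, (φ (m / j) : ℚ) * ((-1) ^ j * s j)) / m := by
  rw [Fval, Finset.sum_div]
  refine Finset.sum_congr rfl fun j hj => ?_
  have hm : (m : ℚ) ≠ 0 := Nat.cast_ne_zero.2 (Nat.mem_divisors.1 hj).2
  have hj0 : (j : ℚ) ≠ 0 := Nat.cast_ne_zero.2 (Nat.pos_of_mem_divisors hj).ne'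
  rw [Nat.totient_eq_mul_prod_factors, Nat.cast_div (Nat.dvd_of_mem_divisors hj) hj0]
  simp only [one_div]
  field_simp

theorem F_is_integer_general (n : ℕ) (a : Fin n → ℤ) (s : ℕ → ℤ)
    (hs : ∀ j, 1 ≤ j → (s j : ℂ) = rootPowerSum n a j)
    (m : ℕ) (hm : 1 ≤ m) :
    ∃ k : ℤ, Fval s m = (k : ℚ) := by
  obtain ⟨t, ht, hdw⟩ := exists_dworkCongruence_neg_pow_mul_rootPowerSum n a
  have hts : ∀ j ∈ m.divisors, ((-1) ^ j * s j : ℚ) = t j := fun j hj => by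
    have : (((-1) ^ j * s j : ℤ) : ℂ) = t j := by
      simp [ht, ← hs j (Nat.pos_of_mem_divisors hj)]
    exact_mod_cast this
  obtain ⟨k, hk⟩ := hdw.dvd_sum_totient_mul m
  refine ⟨k, ?_⟩
  rw [Fval_eq_sum_totient_mul_div, Finset.sum_congr rfl fun j hj => by rw [hts j hj],
    div_eq_iff (Nat.cast_ne_zero.2 (Nat.one_le_iff_ne_zero.1 hm)), mul_comm]
  exact_mod_cast hk

theorem F_is_integer (n : ℕ) (hn : 1 ≤ n) (a : Fin n → ℤ) (s : ℕ → ℤ)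
    (hs : ∀ j, 1 ≤ j → (s j : ℂ) = rootPowerSum n a j)
    (m : ℕ) (hm : 1 ≤ m) :
    ∃ k : ℤ, Fval s m = (k : ℚ) :=
  F_is_integer_general n a s hs m hm
end

section
/- Let p be a prime, m ≥ 1 a natural number, and r₁,…,r_m natural numbers with r₁ + ⋯ + r_m ≥ 1. Then the rational number (pr₁ + pr₂ + ⋯ + pr_m − 1)! / ((pr₁)!·(pr₂)!⋯(pr_m)!) − p⁻¹·(r₁ + r₂ + ⋯ + r_m − 1)! / (r₁!·r₂!⋯r_m!) has nonnegative p-adic valuation, i.e., lies in the localization ℤ_(p) of ℤ at p. -/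
/-!
With `N = ∑ rᵢ`, the difference equals `(multinomial (p • r) - multinomial r) / (p * N)`. These
multinomials are the coefficients at `p • r` of `(∑ Xᵢ) ^ (p * N)` and of `(∑ Xᵢ ^ p) ^ N`. Since
`(∑ Xᵢ) ^ p ≡ ∑ Xᵢ ^ p (mod p)`, the `N`-th powers agree modulo `p ^ (a + 1)` when `p ^ a ∣ N`;
taking `p ^ a` to be the exact power of `p` in `N`, this is the whole `p`-part of `p * N`.
-/

open Finset Nat

theorem natCast_dvd_sum_pow_sub_sum_pow {R ι : Type*} [CommRing R] {p : ℕ} (hp : p.Prime)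
    (s : Finset ι) (f : ι → R) : (p : R) ∣ (∑ i ∈ s, f i) ^ p - ∑ i ∈ s, f i ^ p := by
  classical
  induction s using Finset.induction with
  | empty => simp [zero_pow hp.ne_zero]
  | insert j s hj ih =>
    obtain ⟨c, hc⟩ := exists_add_pow_prime_eq hp (f j) (∑ i ∈ s, f i)
    obtain ⟨d, hd⟩ := ih
    rw [sum_insert hj, sum_insert hj, hc]
    exact ⟨f j * (∑ i ∈ s, f i) * c + d, by linear_combination hd⟩

theorem natCast_pow_succ_dvd_pow_sub_pow {R : Type*} [CommRing R] {p a N : ℕ} {x y : R}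
    (hxy : (p : R) ∣ x - y) (hN : p ^ a ∣ N) : (p : R) ^ (a + 1) ∣ x ^ N - y ^ N := by
  obtain ⟨n, rfl⟩ := hN
  rw [pow_mul, pow_mul]
  exact (dvd_sub_pow_of_dvd_sub hxy a).trans (sub_dvd_pow_sub_pow _ _ n)

open MvPolynomial in
theorem pow_succ_dvd_multinomial_mul_sub_multinomial {ι : Type*} [Fintype ι] {p : ℕ}
    (hp : p.Prime) (r : ι → ℕ) {a : ℕ} (ha : p ^ a ∣ ∑ i, r i) :
    (p : ℤ) ^ (a + 1) ∣ (multinomial univ (fun i => p * r i) : ℤ) - multinomial univ r := by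
  set S : MvPolynomial ι ℤ := ∑ i, X i with hS
  have hcongr : (p : MvPolynomial ι ℤ) ^ (a + 1) ∣
      (S ^ p) ^ (∑ i, r i) - expand p (S ^ ∑ i, r i) := by
    rw [map_pow]
    refine natCast_pow_succ_dvd_pow_sub_pow ?_ ha
    simpa [S] using natCast_dvd_sum_pow_sub_sum_pow hp univ (X : ι → MvPolynomial ι ℤ)
  rw [← map_natCast (C : ℤ →+* MvPolynomial ι ℤ), ← map_pow, C_dvd_iff_dvd_coeff] at hcongr
  set d : ι →₀ ℕ := Finsupp.equivFunOnFinite.symm r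
  have hd : d.sum (fun _ k => k) = ∑ i, r i := by
    rw [Finsupp.sum_fintype _ _ (by simp)]; rfl
  have hpd : (p • d).sum (fun _ k => k) = p * ∑ i, r i := by
    rw [Finsupp.sum_fintype _ _ (by simp), mul_sum]; rfl
  have hcoeff := hcongr (p • d)
  rw [coeff_sub, coeff_expand_smul _ hp.ne_zero, ← pow_mul, hS, coeff_sum_X_pow_of_fintype,
    coeff_sum_X_pow_of_fintype, if_pos hd, if_pos hpd,
    ← Finsupp.multinomial_of_support_subset (subset_univ _),
    ← Finsupp.multinomial_of_support_subset (subset_univ _)] at hcoeff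
  exact_mod_cast hcoeff

theorem factorial_sub_one_div_prod_factorial {K ι : Type*} [Field K] [CharZero K]
    (s : Finset ι) (f : ι → ℕ) (h : ∑ i ∈ s, f i ≠ 0) :
    ((∑ i ∈ s, f i - 1)! : K) / ∏ i ∈ s, ((f i)! : K) = multinomial s f / (∑ i ∈ s, f i : ℕ) := by
  have hprod : ∏ i ∈ s, ((f i)! : K) ≠ 0 :=
    prod_ne_zero_iff.mpr fun i _ => Nat.cast_ne_zero.mpr (factorial_ne_zero _)
  rw [div_eq_div_iff hprod (by exact_mod_cast h), mul_comm]
  exact_mod_cast (mul_factorial_pred h).trans (multinomial_spec s f).symm |>.trans (mul_comm _ _)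

theorem factorial_ratio_difference_p_integral_general (p : ℕ) (hp : p.Prime)
    (m : ℕ) (r : Fin m → ℕ) (hr : 1 ≤ ∑ i, r i) :
    ∃ u v : ℤ, ¬ (p : ℤ) ∣ v ∧
      (((p * ∑ i, r i - 1).factorial : ℚ) / ∏ i, ((p * r i).factorial : ℚ)
        - (1 / (p : ℚ)) * (((∑ i, r i) - 1).factorial : ℚ) / ∏ i, ((r i).factorial : ℚ))
      = (u : ℚ) / (v : ℚ) := by
  have hN : ∑ i, r i ≠ 0 := by omega
  have hpN : ∑ i, p * r i ≠ 0 := by rw [← mul_sum]; exact mul_ne_zero hp.ne_zero hN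
  obtain ⟨a, n, hpn, hNan⟩ := exists_eq_pow_mul_and_not_dvd hN p hp.ne_one
  obtain ⟨u, hu⟩ := pow_succ_dvd_multinomial_mul_sub_multinomial hp r ⟨n, hNan⟩
  refine ⟨u, n, Int.natCast_dvd_natCast.not.mpr hpn, ?_⟩
  have hu' : (multinomial univ (fun i => p * r i) : ℚ)
      = multinomial univ r + (p : ℚ) ^ (a + 1) * u := by
    rw [← sub_eq_iff_eq_add']; exact_mod_cast hu
  have hp0 : (p : ℚ) ≠ 0 := by exact_mod_cast hp.ne_zero
  have hn0 : (n : ℚ) ≠ 0 := Nat.cast_ne_zero.mpr (by rintro rfl; exact hpn (dvd_zero p))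
  rw [mul_sum, factorial_sub_one_div_prod_factorial _ _ hpN, mul_div_assoc,
    factorial_sub_one_div_prod_factorial _ _ hN, ← mul_sum, hNan, hu']
  push_cast
  field_simp
  ring

theorem factorial_ratio_difference_p_integral (p : ℕ) (hp : p.Prime)
    (m : ℕ) (hm : 1 ≤ m) (r : Fin m → ℕ) (hr : 1 ≤ ∑ i, r i) :
    ∃ u v : ℤ, ¬ (p : ℤ) ∣ v ∧
      (((p * ∑ i, r i - 1).factorial : ℚ) / ∏ i, ((p * r i).factorial : ℚ)
        - (1 / (p : ℚ)) * (((∑ i, r i) - 1).factorial : ℚ) / ∏ i, ((r i).factorial : ℚ))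
      = (u : ℚ) / (v : ℚ) :=
  factorial_ratio_difference_p_integral_general p hp m r hr
end

section
/- (Generalized Fermat's little theorem.) Let n ≥ 1, a ∈ ℤⁿ, p a prime, and v ≥ 1. Then p^v divides the integer (−1)^{p^v}·s_{p^v}(a) − (−1)^{p^{v−1}}·s_{p^{v−1}}(a). -/
/-!
The roots `θᵢ` are algebraic integers. In the ring of `p`-typical Witt vectors over the
integral closure of `ℤ` in `ℂ`, the sum of Teichmüller lifts `[θ₁] + ⋯ + [θₙ]` has `m`-th ghost
component `s_{p^m}`. These ghost components are integers, so the recursion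
`p^m c_m = w_m - ∑_{i<m} p^i c_i^{p^(m-i)}` shows that each Witt coefficient `c_m` is a
rational algebraic integer, hence lies in `ℤ`. For a Witt vector over `ℤ` the ghost components
satisfy `w_{m+1} ≡ w_m (mod p^(m+1))`, term by term from
`b^(p^(k+1)) ≡ b^(p^k) (mod p^(k+1))`; the same congruence with `b = -1` handles the signs.
-/

open Polynomial

theorem Int.prime_pow_succ_dvd_pow_prime_pow_succ_sub {p : ℕ} (hp : p.Prime) (b : ℤ) (k : ℕ) :
    (p : ℤ) ^ (k + 1) ∣ b ^ p ^ (k + 1) - b ^ p ^ k := by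
  simpa only [← pow_mul, ← pow_succ'] using
    dvd_sub_pow_of_dvd_sub (Int.prime_dvd_pow_self_sub hp b) k

theorem IsIntegral.exists_int_eq_of_natCast_mul_eq_intCast {K : Type*} [Field K] [CharZero K]
    {x : K} (hx : IsIntegral ℤ x) {N : ℕ} (hN : N ≠ 0) {k : ℤ} (h : N * x = k) :
    ∃ b : ℤ, x = b :=
  hx.exists_int_iff_exists_rat.1 ⟨k / N, by
    rw [Rat.cast_div, Rat.cast_intCast, Rat.cast_natCast, ← h,
      mul_div_cancel_left₀ _ (Nat.cast_ne_zero.2 hN)]⟩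

theorem Polynomial.Monic.isIntegral_of_mem_roots_map {R S : Type*} [CommRing R] [CommRing S]
    [IsDomain S] [Algebra R S] {f : R[X]} (hf : f.Monic) {x : S}
    (hx : x ∈ (f.map (algebraMap R S)).roots) : IsIntegral R x :=
  ⟨f, hf, by rw [← eval_map]; exact isRoot_of_mem_roots hx⟩

namespace WittVector

variable {p : ℕ} [Fact p.Prime]

theorem ghostComponent_map {R S : Type*} [CommRing R] [CommRing S] (f : R →+* S)
    (x : WittVector p R) (n : ℕ) : ghostComponent n (map f x) = f (ghostComponent n x) := by
  simp only [ghostComponent_apply, aeval_wittPolynomial, map_coeff, map_sum, map_mul, map_pow,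
    map_natCast]

theorem ghostComponent_multiset_sum_teichmuller {R : Type*} [CommRing R] (t : Multiset R)
    (n : ℕ) : ghostComponent n (t.map (teichmuller p)).sum = (t.map (· ^ p ^ n)).sum := by
  simp only [map_multiset_sum, Multiset.map_map, Function.comp_def, ghostComponent_teichmuller]

theorem ghostComponent_eq_sum_add {R : Type*} [CommRing R] (x : WittVector p R) (n : ℕ) :
    ghostComponent n x =
      ∑ i ∈ Finset.range n, (p : R) ^ i * x.coeff i ^ p ^ (n - i) + (p : R) ^ n * x.coeff n := by
  rw [ghostComponent_apply, aeval_wittPolynomial, Finset.sum_range_succ, Nat.sub_self, pow_zero,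
    pow_one]

theorem prime_pow_succ_dvd_ghostComponent_succ_sub (w : WittVector p ℤ) (k : ℕ) :
    (p : ℤ) ^ (k + 1) ∣ ghostComponent (k + 1) w - ghostComponent k w := by
  rw [ghostComponent_eq_sum_add w (k + 1), ghostComponent_apply, aeval_wittPolynomial,
    add_sub_right_comm, ← Finset.sum_sub_distrib]
  refine dvd_add (Finset.dvd_sum fun i hi => ?_) (dvd_mul_right _ _)
  obtain ⟨j, rfl⟩ := Nat.exists_eq_add_of_le (Finset.mem_range_succ_iff.1 hi)
  rw [← mul_sub, show i + j + 1 - i = j + 1 by omega, Nat.add_sub_cancel_left, add_assoc,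
    pow_add]
  exact mul_dvd_mul_left _ (Int.prime_pow_succ_dvd_pow_prime_pow_succ_sub Fact.out _ j)

variable {K : Type*} [Field K] [CharZero K]

theorem coeff_mem_bot_of_ghostComponent_mem_bot (x : WittVector p (integralClosure ℤ K))
    (hx : ∀ n, ghostComponent n x ∈ (⊥ : Subring (integralClosure ℤ K))) (n : ℕ) :
    x.coeff n ∈ (⊥ : Subring (integralClosure ℤ K)) := by
  induction n using Nat.strong_induction_on with
  | _ n ih =>
    have hlower : ∑ i ∈ Finset.range n, (p : integralClosure ℤ K) ^ i * x.coeff i ^ p ^ (n - i) ∈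
        (⊥ : Subring (integralClosure ℤ K)) :=
      Subring.sum_mem _ fun i hi =>
        mul_mem (pow_mem (natCast_mem _ p) i) (pow_mem (ih i (Finset.mem_range.1 hi)) _)
    obtain ⟨k, hk⟩ := Subring.mem_bot.1 (sub_mem (hx n) hlower)
    rw [ghostComponent_eq_sum_add, add_sub_cancel_left] at hk
    have hpx : ((p ^ n : ℕ) : K) * x.coeff n = k := by
      exact_mod_cast congrArg Subtype.val hk.symm
    obtain ⟨b, hb⟩ := (x.coeff n).2.exists_int_eq_of_natCast_mul_eq_intCast
      (pow_ne_zero n (Fact.out : p.Prime).ne_zero) hpx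
    exact Subring.mem_bot.2 ⟨b, Subtype.ext (by simpa using hb.symm)⟩

theorem exists_ghostComponent_eq_of_isIntegral (t : Multiset K) (ht : ∀ x ∈ t, IsIntegral ℤ x)
    (g : ℕ → ℤ) (hg : ∀ n, (t.map (· ^ p ^ n)).sum = g n) :
    ∃ w : WittVector p ℤ, ∀ n, ghostComponent n w = g n := by
  lift t to Multiset (integralClosure ℤ K) using ht
  set x := (t.map (teichmuller p)).sum
  have hghost : ∀ n, ghostComponent n x = g n := fun n => Subtype.ext <| by
    rw [ghostComponent_multiset_sum_teichmuller]
    simpa [Multiset.map_map] using hg n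
  have hcoeff := coeff_mem_bot_of_ghostComponent_mem_bot x
    fun n => Subring.mem_bot.2 ⟨g n, (hghost n).symm⟩
  choose b hb using fun n => Subring.mem_bot.1 (hcoeff n)
  have hx : map (Int.castRingHom _) (mk p b) = x := ext fun n => by simp [map_coeff, hb]
  refine ⟨mk p b, fun n => Int.cast_injective (α := integralClosure ℤ K) ?_⟩
  rw [← hghost, ← hx, ghostComponent_map, eq_intCast]

end WittVector

noncomputable def rootPoly (n : ℕ) (a : Fin n → ℤ) : ℤ[X] :=
  X ^ n + ∑ i : Fin n, C ((-1) ^ ((i : ℕ) + 1) * a i) * X ^ (n - ((i : ℕ) + 1))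

theorem rootPoly_monic (n : ℕ) (a : Fin n → ℤ) : (rootPoly n a).Monic := by
  refine monic_X_pow_add ((degree_sum_le _ _).trans_lt <|
    (Finset.sup_lt_iff (WithBot.bot_lt_coe n)).2 fun i _ => ?_)
  exact (degree_C_mul_X_pow_le _ _).trans_lt
    (WithBot.coe_lt_coe.2 (Nat.sub_lt i.pos (i : ℕ).succ_pos))

theorem rootPowerSum_eq_sum_roots (n : ℕ) (a : Fin n → ℤ) (j : ℕ) :
    rootPowerSum n a j = (((rootPoly n a).map (algebraMap ℤ ℂ)).roots.map (· ^ j)).sum := by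
  simp [rootPowerSum, rootPoly, Polynomial.map_sum]

theorem generalized_fermat_little_general (n : ℕ) (a : Fin n → ℤ) (s : ℕ → ℤ)
    (hs : ∀ j, 1 ≤ j → (s j : ℂ) = rootPowerSum n a j)
    (p : ℕ) (hp : p.Prime) (v : ℕ) :
    (p : ℤ) ^ v ∣ ((-1) ^ (p ^ v) * s (p ^ v) - (-1) ^ (p ^ (v - 1)) * s (p ^ (v - 1))) := by
  have := Fact.mk hp
  obtain ⟨w, hw⟩ := WittVector.exists_ghostComponent_eq_of_isIntegral (p := p) _
    (fun _ => (rootPoly_monic n a).isIntegral_of_mem_roots_map) (fun m => s (p ^ m))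
    (fun m => by rw [← rootPowerSum_eq_sum_roots, hs _ (Nat.one_le_pow _ _ hp.pos)])
  cases v with
  | zero => simp
  | succ k =>
    rw [Nat.add_sub_cancel, ← hw, ← hw,
      show ∀ x y S T : ℤ, x * S - y * T = x * (S - T) + (x - y) * T from fun _ _ _ _ => by ring]
    exact dvd_add (dvd_mul_of_dvd_right (w.prime_pow_succ_dvd_ghostComponent_succ_sub k) _)
      (dvd_mul_of_dvd_left (Int.prime_pow_succ_dvd_pow_prime_pow_succ_sub hp (-1) k) _)

/-- Generalized Fermat's little theorem. -/
theorem generalized_fermat_little (n : ℕ) (hn : 1 ≤ n) (a : Fin n → ℤ) (s : ℕ → ℤ)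
    (hs : ∀ j, 1 ≤ j → (s j : ℂ) = rootPowerSum n a j)
    (p : ℕ) (hp : p.Prime) (v : ℕ) (hv : 1 ≤ v) :
    (p : ℤ) ^ v ∣ ((-1) ^ (p ^ v) * s (p ^ v) - (-1) ^ (p ^ (v - 1)) * s (p ^ (v - 1))) :=
  generalized_fermat_little_general n a s hs p hp v
end

section
/- Let m be an even natural number. Then G(m,a) mod 2 is 4-periodic in each component of a: for every n ≥ 1, every a = (a₁,…,aₙ) ∈ ℤⁿ and every index 1 ≤ j ≤ n, if a′ is defined by a′ᵢ = aᵢ for i ≠ j and a′ⱼ = aⱼ + 4, then G(m, a) ≡ G(m, a′) (mod 2). -/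
open Polynomial

/-!
Write `g_a = 1 − a₁X + a₂X² − ⋯ + (−1)ⁿaₙXⁿ = ∏ (1 − θᵢX)`. Newton's identity says that
`S_a = Σ_{k ≥ 0} s_{k+1}(a) Xᵏ` satisfies `g_a S_a = −g_a'`. Adding `4` to `aⱼ` adds `±4X^{j+1}` to
`g_a`, so `g_{a'} = (1 + 4u) g_a` with `u ∈ ℤ⟦X⟧`, `u(0) = 0`, and therefore
`S_a − S_{a'} = d/dX log(1 + 4u)`. The coefficients of `log(1 + 4u) = Σ (−1)^{r+1} 4ʳuʳ/r` are
2-adically divisible by `4`, since `v₂(4ʳ/r) ≥ 2`. Hence `2^{v₂(k)+2}` divides `s_k(a) − s_k(a')`,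
and comparing `k = m` with `k = 2m` gives `G(m,a) ≡ G(m,a') (mod 2)`.
-/

open scoped PowerSeries

theorem padicNorm_prime_pow_mul_div_le {p : ℕ} [Fact p.Prime] {e d : ℕ} (he : 1 ≤ e)
    (hd : d ≠ 0) : padicNorm p ((p : ℚ) ^ (e * d) / d) ≤ (p : ℚ) ^ (-e : ℤ) := by
  have hp := (Fact.out : p.Prime)
  have hp0 : (p : ℚ) ≠ 0 := Nat.cast_ne_zero.mpr hp.ne_zero
  have hd0 : (d : ℚ) ≠ 0 := Nat.cast_ne_zero.mpr hd
  have hv : padicValNat p d < d := (padicValNat_le_nat_log d).trans_lt (Nat.log_lt_self p hd)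
  rw [padicNorm.eq_zpow_of_nonzero (div_ne_zero (pow_ne_zero _ hp0) hd0),
    padicValRat.div (pow_ne_zero _ hp0) hd0, padicValRat.pow, padicValRat.self hp.one_lt,
    padicValRat.of_nat]
  refine zpow_le_zpow_right₀ (by exact_mod_cast hp.one_le) ?_
  have hd1 : (1 : ℤ) ≤ d := by omega
  have he1 : (1 : ℤ) ≤ e := by omega
  have hv' : (padicValNat p d : ℤ) + 1 ≤ d := by omega
  push_cast
  -- `v_p(d) ≤ d - 1 ≤ e (d - 1)`
  nlinarith [mul_nonneg (sub_nonneg.mpr he1) (sub_nonneg.mpr hd1)]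

namespace PowerSeries

section CommRing

variable {R S : Type*} [CommRing R] [CommRing S]

@[simp]
theorem constantCoeff_map (f : R →+* S) (φ : R⟦X⟧) :
    constantCoeff (map f φ) = f (constantCoeff φ) := by
  rw [← coeff_zero_eq_constantCoeff_apply, coeff_map, coeff_zero_eq_constantCoeff_apply]

theorem map_derivative (f : R →+* S) (φ : R⟦X⟧) :
    map f (d⁄dX R φ) = d⁄dX S (map f φ) := by
  ext k
  simp [coeff_derivative]

noncomputable def powerSumSeries (M : Multiset R) : R⟦X⟧ :=
  mk fun k => (M.map (· ^ (k + 1))).sum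

theorem one_sub_C_mul_X_mul_mk_pow_succ (θ : R) :
    (1 - C θ * X) * mk (fun k => θ ^ (k + 1)) = C θ := by
  have h := congrArg (rescale θ) (mk_one_mul_one_sub_eq_one (S := R))
  rw [map_mul, map_sub, map_one, rescale_X, rescale_mk] at h
  simp only [Pi.one_apply, mul_one] at h
  have hmk : mk (fun k => θ ^ (k + 1)) = C θ * mk fun k => θ ^ k := by
    ext k
    simp [pow_succ, mul_comm]
  rw [hmk, mul_left_comm, mul_comm (1 - _), h, mul_one]

theorem multiset_prod_one_sub_C_mul_X_mul_powerSumSeries (M : Multiset R) :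
    (M.map fun θ => 1 - C θ * X).prod * powerSumSeries M =
      -d⁄dX R (M.map fun θ => 1 - C θ * X).prod := by
  induction M using Multiset.induction with
  | empty =>
    ext
    simp [powerSumSeries]
  | cons θ M ih =>
    have hS : powerSumSeries (θ ::ₘ M) = mk (fun k => θ ^ (k + 1)) + powerSumSeries M := by
      ext k
      simp [powerSumSeries]
    have hD : d⁄dX R (1 - C θ * X) = -C θ := by simp
    rw [Multiset.map_cons, Multiset.prod_cons, hS, Derivation.leibniz, hD, smul_eq_mul,
      smul_eq_mul]
    linear_combination (1 - C θ * X) * ih +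
      (M.map fun θ => 1 - C θ * X).prod * one_sub_C_mul_X_mul_mk_pow_succ θ

end CommRing

section Log

variable {A : Type*} [CommRing A] [Algebra ℚ A]

theorem derivative_log_mul_one_add_X : d⁄dX A (log A) * (1 + X) = 1 := by
  ext n
  rw [deriv_log, mul_add, mul_one, map_add]
  cases n with
  | zero => simp
  | succ n => simp [coeff_succ_mul_X, pow_succ, coeff_one]

theorem one_add_mul_derivative_log_subst {w : A⟦X⟧} (hw : HasSubst w) :
    (1 + w) * d⁄dX A ((log A).subst w) = d⁄dX A w := by
  have h := congrArg (substAlgHom hw) (derivative_log_mul_one_add_X (A := A))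
  rw [map_mul, map_add, map_one, substAlgHom_X, coe_substAlgHom] at h
  rw [derivative_subst hw, ← mul_assoc, mul_comm (1 + w), h, one_mul]

theorem sub_eq_derivative_log_subst [IsDomain A] {G S S' w : A⟦X⟧} (hG : G ≠ 0)
    (hw : constantCoeff w = 0) (hS : G * S = -d⁄dX A G)
    (hS' : ((1 + w) * G) * S' = -d⁄dX A ((1 + w) * G)) :
    S - S' = d⁄dX A ((log A).subst w) := by
  have hlog := one_add_mul_derivative_log_subst (HasSubst.of_constantCoeff_zero' hw)
  have hw1 : 1 + w ≠ 0 := fun h => by simpa [hw] using congrArg constantCoeff h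
  rw [Derivation.leibniz, smul_eq_mul, smul_eq_mul, map_add, Derivation.map_one_eq_zero,
    zero_add] at hS'
  refine mul_right_cancel₀ (mul_ne_zero hG (mul_ne_zero hw1 hG)) ?_
  linear_combination (1 + w) * G * hS - G * hS' - G ^ 2 * hlog

end Log

theorem padicNorm_coeff_log_subst_le {p : ℕ} [Fact p.Prime] {e : ℕ} (he : 1 ≤ e) {u : ℤ⟦X⟧}
    (hu : constantCoeff u = 0) (k : ℕ) :
    padicNorm p (coeff k ((log ℚ).subst (map (Int.castRingHom ℚ) (C ((p : ℤ) ^ e) * u)))) ≤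
      (p : ℚ) ^ (-e : ℤ) := by
  have hw : HasSubst (map (Int.castRingHom ℚ) (C ((p : ℤ) ^ e) * u)) :=
    HasSubst.of_constantCoeff_zero' (by simp [hu])
  rw [coeff_subst' hw, finsum_eq_sum _ (coeff_subst_finite' hw _ _)]
  refine padicNorm.sum_le' (fun d _ => ?_) (by positivity)
  rw [coeff_log]
  split_ifs with hd
  · simp
  have hcoeff : coeff k (map (Int.castRingHom ℚ) (C ((p : ℤ) ^ e) * u) ^ d) =
      (p : ℚ) ^ (e * d) * ((coeff k (u ^ d) : ℤ) : ℚ) := by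
    rw [← map_pow, mul_pow, ← map_pow, map_mul, map_C, coeff_C_mul, coeff_map]
    simp [pow_mul]
  rw [hcoeff, Algebra.algebraMap_self, RingHom.id_apply, smul_eq_mul,
    show (-1 : ℚ) ^ (d + 1) / d * ((p : ℚ) ^ (e * d) * ((coeff k (u ^ d) : ℤ) : ℚ)) =
      (-1) ^ (d + 1) * ((p : ℚ) ^ (e * d) / d * ((coeff k (u ^ d) : ℤ) : ℚ)) by ring]
  have hbound : padicNorm p ((p : ℚ) ^ (e * d) / d * ((coeff k (u ^ d) : ℤ) : ℚ)) ≤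
      (p : ℚ) ^ (-e : ℤ) := by
    rw [padicNorm.mul]
    exact (mul_le_of_le_one_right (padicNorm.nonneg _) (padicNorm.of_int _)).trans
      (padicNorm_prime_pow_mul_div_le he hd)
  rcases neg_one_pow_eq_or ℚ (d + 1) with h | h <;> simpa [h, padicNorm.neg] using hbound

theorem pow_dvd_coeff_sub_of_mul_eq_neg_derivative {p : ℕ} [Fact p.Prime] {e : ℕ} (he : 1 ≤ e)
    {G h S S' : ℤ⟦X⟧} (hG : IsUnit G) (hh : constantCoeff h = 0)
    (hS : G * S = -d⁄dX ℤ G)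
    (hS' : (G + C ((p : ℤ) ^ e) * h) * S' = -d⁄dX ℤ (G + C ((p : ℤ) ^ e) * h)) (k : ℕ) :
    (p : ℤ) ^ (padicValNat p (k + 1) + e) ∣ coeff k S - coeff k S' := by
  set u := h * ↑hG.unit⁻¹
  have hu : constantCoeff u = 0 := by simp [u, hh]
  have hG' : G + C ((p : ℤ) ^ e) * h = (1 + C ((p : ℤ) ^ e) * u) * G := by
    rw [add_mul, one_mul, mul_assoc, mul_assoc, IsUnit.val_inv_mul, mul_one]
  set φ := map (Int.castRingHom ℚ)
  have hφ (F T : ℤ⟦X⟧) (hFT : F * T = -d⁄dX ℤ F) : φ F * φ T = -d⁄dX ℚ (φ F) := by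
    rw [← map_mul, hFT, map_neg, map_derivative]
  have hdiff : φ S - φ S' = d⁄dX ℚ ((log ℚ).subst (φ (C ((p : ℤ) ^ e) * u))) := by
    refine sub_eq_derivative_log_subst (hG.map φ).ne_zero (by simp [φ, hu]) (hφ _ _ hS) ?_
    rw [← map_one φ, ← map_add, ← map_mul, ← hG']
    exact hφ _ _ hS'
  have hcoeff := congrArg (coeff k) hdiff
  rw [map_sub, coeff_derivative, coeff_map, coeff_map, eq_intCast, eq_intCast] at hcoeff
  rw [← Nat.cast_pow, padicNorm.dvd_iff_norm_le, Int.cast_sub, hcoeff, padicNorm.mul]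
  have hk : padicNorm p ((k : ℚ) + 1) = (p : ℚ) ^ (-(padicValNat p (k + 1) : ℤ)) := by
    rw [padicNorm.eq_zpow_of_nonzero (by positivity), ← Nat.cast_succ, padicValRat.of_nat]
  rw [hk, Nat.cast_add, neg_add, zpow_add₀ (Nat.cast_ne_zero.mpr (Fact.out : p.Prime).ne_zero),
    mul_comm]
  gcongr
  exact padicNorm_coeff_log_subst_le he hu _

end PowerSeries

namespace Polynomial

theorem reflect_multiset_prod_X_sub_C {R : Type*} [CommRing R] [Nontrivial R] (M : Multiset R) :
    reflect (Multiset.card M) (M.map fun θ => X - C θ).prod =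
      (M.map fun θ => 1 - C θ * X).prod := by
  induction M using Multiset.induction with
  | empty => simp
  | cons θ M ih =>
    rw [Multiset.card_cons, add_comm, Multiset.map_cons, Multiset.prod_cons, Multiset.map_cons,
      Multiset.prod_cons, reflect_mul _ _ (natDegree_X_sub_C_le θ)
        (natDegree_multiset_prod_X_sub_C_eq_card M).le, ih, reflect_sub, reflect_one_X, reflect_C,
      pow_one]

variable {K : Type*} [Field K] [IsAlgClosed K]

theorem eq_multiset_prod_one_sub_C_mul_X_roots_reflect {f : K[X]} {N : ℕ} (hf : f.natDegree ≤ N)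
    (h0 : f.coeff 0 = 1) : f = ((f.reflect N).roots.map fun θ => 1 - C θ * X).prod := by
  have hcoeff : (f.reflect N).coeff N = 1 := by
    rw [coeff_reflect, revAt_le le_rfl, Nat.sub_self, h0]
  have hdeg : (f.reflect N).natDegree = N :=
    natDegree_eq_of_le_of_coeff_ne_zero (natDegree_reflect_le.trans (max_le le_rfl hf))
      (hcoeff ▸ one_ne_zero)
  have hmonic : (f.reflect N).Monic := by rw [Monic, leadingCoeff, hdeg, hcoeff]
  have hcard : Multiset.card (f.reflect N).roots = N :=
    IsAlgClosed.card_roots_eq_natDegree.trans hdeg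
  have hprod := reflect_multiset_prod_X_sub_C (f.reflect N).roots
  rwa [hcard, ← (IsAlgClosed.splits (f.reflect N)).eq_prod_roots_of_monic hmonic,
    reflect_reflect] at hprod

theorem coe_mul_powerSumSeries_roots_reflect {f : K[X]} {N : ℕ} (hf : f.natDegree ≤ N)
    (h0 : f.coeff 0 = 1) :
    (f : K⟦X⟧) * PowerSeries.powerSumSeries (f.reflect N).roots = -d⁄dX K (f : K⟦X⟧) := by
  have hcoe : (f : K⟦X⟧) =
      ((f.reflect N).roots.map fun θ => 1 - PowerSeries.C θ * PowerSeries.X).prod := by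
    conv_lhs => rw [eq_multiset_prod_one_sub_C_mul_X_roots_reflect hf h0]
    rw [← coeToPowerSeries.ringHom_apply, map_multiset_prod, Multiset.map_map]
    simp [Function.comp_def]
  rw [hcoe]
  exact PowerSeries.multiset_prod_one_sub_C_mul_X_mul_powerSumSeries _

end Polynomial

noncomputable def reciprocalPoly {n : ℕ} (a : Fin n → ℤ) : ℤ[X] :=
  1 + ∑ i : Fin n, C ((-1) ^ ((i : ℕ) + 1) * a i) * X ^ ((i : ℕ) + 1)

section reciprocalPoly

variable {n : ℕ}

theorem natDegree_reciprocalPoly_le (a : Fin n → ℤ) : (reciprocalPoly a).natDegree ≤ n :=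
  natDegree_add_le_of_degree_le (natDegree_one.trans_le (Nat.zero_le n))
    (natDegree_sum_le_of_forall_le _ _ fun i _ => (natDegree_C_mul_X_pow_le _ _).trans i.2)

theorem coeff_zero_reciprocalPoly (a : Fin n → ℤ) : (reciprocalPoly a).coeff 0 = 1 := by
  simp [reciprocalPoly, coeff_X_pow]

theorem reflect_map_reciprocalPoly (a : Fin n → ℤ) :
    reflect n ((reciprocalPoly a).map (Int.castRingHom ℂ)) =
      X ^ n + ∑ i : Fin n, C ((-1 : ℂ) ^ ((i : ℕ) + 1) * (a i : ℂ)) * X ^ (n - ((i : ℕ) + 1)) := by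
  simp only [reciprocalPoly, Polynomial.map_add, Polynomial.map_one, Polynomial.map_sum,
    Polynomial.map_mul, map_C, Polynomial.map_pow, map_X, reflect_add, reflect_one]
  rw [← AddMonoidHom.mk'_apply (reflect n) (fun f g => reflect_add f g n), map_sum]
  refine congrArg _ (Finset.sum_congr rfl fun i _ => ?_)
  rw [AddMonoidHom.mk'_apply, reflect_C_mul_X_pow, revAt_le i.2]
  simp

theorem reciprocalPoly_mul_eq_neg_derivative (a : Fin n → ℤ) (s : ℕ → ℤ)
    (hs : ∀ k, 1 ≤ k → (s k : ℂ) = rootPowerSum n a k) :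
    (reciprocalPoly a : ℤ⟦X⟧) * PowerSeries.mk (fun k => s (k + 1)) =
      -d⁄dX ℤ (reciprocalPoly a : ℤ⟦X⟧) := by
  refine PowerSeries.map_injective (Int.castRingHom ℂ) Int.cast_injective ?_
  have hS : PowerSeries.map (Int.castRingHom ℂ) (PowerSeries.mk fun k => s (k + 1)) =
      PowerSeries.powerSumSeries
        (reflect n ((reciprocalPoly a).map (Int.castRingHom ℂ))).roots := by
    ext k
    simp [PowerSeries.powerSumSeries, hs (k + 1) (by omega), rootPowerSum,
      reflect_map_reciprocalPoly]
  rw [map_mul, map_neg, PowerSeries.map_derivative, ← polynomial_map_coe, hS]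
  exact coe_mul_powerSumSeries_roots_reflect
    ((natDegree_map_le).trans (natDegree_reciprocalPoly_le a))
    (by simp [coeff_zero_reciprocalPoly])

theorem reciprocalPoly_of_eq_ite {a a' : Fin n → ℤ} {j : Fin n} {c : ℤ}
    (ha' : ∀ i, a' i = if i = j then a i + c else a i) :
    reciprocalPoly a' =
      reciprocalPoly a + C c * (C ((-1) ^ ((j : ℕ) + 1)) * X ^ ((j : ℕ) + 1)) := by
  have hterm (i : Fin n) : C ((-1) ^ ((i : ℕ) + 1) * a' i) * X ^ ((i : ℕ) + 1) =
      C ((-1) ^ ((i : ℕ) + 1) * a i) * X ^ ((i : ℕ) + 1) +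
        if i = j then C c * (C ((-1) ^ ((j : ℕ) + 1)) * X ^ ((j : ℕ) + 1)) else 0 := by
    rw [ha']
    split_ifs with h
    · subst h
      simp only [map_mul, map_add]
      ring
    · rw [add_zero]
  simp only [reciprocalPoly, hterm, Finset.sum_add_distrib, Finset.sum_ite_eq', Finset.mem_univ,
    if_true, add_assoc]

theorem pow_dvd_rootPowerSum_sub {p : ℕ} [Fact p.Prime] {e : ℕ} (he : 1 ≤ e)
    {a a' : Fin n → ℤ} {j : Fin n} {c : ℤ}
    (ha' : ∀ i, a' i = if i = j then a i + p ^ e * c else a i) {s s' : ℕ → ℤ}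
    (hs : ∀ k, 1 ≤ k → (s k : ℂ) = rootPowerSum n a k)
    (hs' : ∀ k, 1 ≤ k → (s' k : ℂ) = rootPowerSum n a' k) (k : ℕ) (hk : 1 ≤ k) :
    (p : ℤ) ^ (padicValNat p k + e) ∣ s k - s' k := by
  obtain ⟨k, rfl⟩ : ∃ l, k = l + 1 := ⟨k - 1, by omega⟩
  have hG : IsUnit (reciprocalPoly a : ℤ⟦X⟧) := by
    simp [PowerSeries.isUnit_iff_constantCoeff, coeff_zero_reciprocalPoly]
  have hS' := reciprocalPoly_mul_eq_neg_derivative a' s' hs'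
  rw [reciprocalPoly_of_eq_ite ha', map_mul, mul_assoc] at hS'
  push_cast at hS'
  simpa using PowerSeries.pow_dvd_coeff_sub_of_mul_eq_neg_derivative he hG (by simp)
    (reciprocalPoly_mul_eq_neg_derivative a s hs) hS' k

end reciprocalPoly

theorem two_dvd_of_two_pow_mul_eq_sub {v : ℕ} {x y z : ℤ} (hy : 2 ^ (v + 2) ∣ y)
    (hz : 2 ^ (v + 2) ∣ z) (h : 2 ^ (v + 1) * x = y - z) : 2 ∣ x := by
  have : 2 ^ (v + 1) * 2 ∣ 2 ^ (v + 1) * x := by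
    rw [h, ← pow_succ]
    exact dvd_sub hy hz
  exact (mul_dvd_mul_iff_left (by positivity)).mp this

theorem G_mod_two_four_periodic_in_coefficients_general (n : ℕ)
    (a : Fin n → ℤ) (j : Fin n)
    (a' : Fin n → ℤ) (ha' : ∀ i, a' i = if i = j then a i + 4 else a i)
    (s s' g g' : ℕ → ℤ)
    (hs : ∀ k, 1 ≤ k → (s k : ℂ) = rootPowerSum n a k)
    (hs' : ∀ k, 1 ≤ k → (s' k : ℂ) = rootPowerSum n a' k)
    (hg : ∀ m, 1 ≤ m → 2 ^ (padicValNat 2 m + 1) * g m = s (2 * m) - s m)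
    (hg' : ∀ m, 1 ≤ m → 2 ^ (padicValNat 2 m + 1) * g' m = s' (2 * m) - s' m)
    (m : ℕ) (hm : 1 ≤ m) :
    ∃ c : ℤ, g m - g' m = 2 * c := by
  have hdvd := pow_dvd_rootPowerSum_sub (p := 2) (e := 2) (j := j) (c := 1) (by norm_num)
    (fun i => by rw [ha' i]; norm_num) hs hs'
  have h2m : padicValNat 2 (2 * m) = padicValNat 2 m + 1 := by
    rw [padicValNat.mul two_ne_zero (by omega), padicValNat.self one_lt_two, add_comm]
  refine two_dvd_of_two_pow_mul_eq_sub
    ((pow_dvd_pow 2 (by omega)).trans (h2m ▸ hdvd (2 * m) (by omega))) (hdvd m hm) ?_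
  linear_combination hg m hm - hg' m hm

theorem G_mod_two_four_periodic_in_coefficients (n : ℕ) (hn : 1 ≤ n)
    (a : Fin n → ℤ) (j : Fin n)
    (a' : Fin n → ℤ) (ha' : ∀ i, a' i = if i = j then a i + 4 else a i)
    (s s' g g' : ℕ → ℤ)
    (hs : ∀ k, 1 ≤ k → (s k : ℂ) = rootPowerSum n a k)
    (hs' : ∀ k, 1 ≤ k → (s' k : ℂ) = rootPowerSum n a' k)
    (hg : ∀ m, 1 ≤ m → 2 ^ (padicValNat 2 m + 1) * g m = s (2 * m) - s m)
    (hg' : ∀ m, 1 ≤ m → 2 ^ (padicValNat 2 m + 1) * g' m = s' (2 * m) - s' m)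
    (m : ℕ) (hm : 1 ≤ m) (hme : Even m) :
    ∃ c : ℤ, g m - g' m = 2 * c :=
  G_mod_two_four_periodic_in_coefficients_general n a j a' ha' s s' g g' hs hs' hg hg' m hm
end

section
/- Let a ∈ ℤ, m ≥ 1, and set G(m,a) = (a^{2m} − a^m)/2^{v₂(m)+1}, where v₂ is the 2-adic valuation. Then G(m,a) is an integer and: G(m,a) is even if a ≡ 0 or 1 (mod 4); G(m,a) is odd exactly when m ∈ {1,2} if a ≡ 2 (mod 4); and G(m,a) is odd exactly when m is odd if a ≡ 3 (mod 4). -/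
/-!
Write a^{2m} - a^m = a^m (a^m - 1). For even a the power of 2 in it is that of a^m, so everything
is decided by v₂(a) and m, and v₂(m) + 1 ≤ m with equality only for m ∈ {1, 2}. For odd a, the
factorisation a^{2^{k+2}} - 1 = (a^{2^{k+1}} - 1)(a^{2^{k+1}} + 1) gives 2^{k+3} ∣ a^{2^{k+1}} - 1,
hence 2^{v₂(m)+2} ∣ a^m - 1 for even m; for odd m we have v₂(m) = 0 and only a^{2m} - a^m mod 4
matters. In each case G is even exactly when 2^{v₂(m)+2} divides a^{2m} - a^m.
-/

namespace Nat

variable {m : ℕ}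

lemma padicValNat_two_add_one_le (hm : m ≠ 0) : padicValNat 2 m + 1 ≤ m :=
  Nat.lt_two_pow_self.trans_le (le_of_dvd (pos_of_ne_zero hm) pow_padicValNat_dvd)

lemma padicValNat_two_add_one_eq_iff (hm : m ≠ 0) :
    padicValNat 2 m + 1 = m ↔ m = 1 ∨ m = 2 := by
  refine ⟨fun h => ?_, ?_⟩
  · set v := padicValNat 2 m
    have h2v : 2 ^ v ≤ m := le_of_dvd (pos_of_ne_zero hm) pow_padicValNat_dvd
    have hv : v < 2 := by
      by_contra! hv
      obtain ⟨k, hk⟩ := Nat.exists_eq_add_of_le hv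
      have : k + 1 < 2 ^ (k + 1) := Nat.lt_two_pow_self
      rw [hk, pow_add] at h2v
      omega
    omega
  · rintro (rfl | rfl) <;> simp

end Nat

lemma pow_two_mul_sub_pow_eq_mul_pow_sub_one {R : Type*} [CommRing R] (a : R) (m : ℕ) :
    a ^ (2 * m) - a ^ m = a ^ m * (a ^ m - 1) := by
  ring

namespace Int

variable {a : ℤ} {m : ℕ}

lemma exists_eq_two_pow_mul_and_even_iff {x : ℤ} {k : ℕ} (h : 2 ^ k ∣ x) :
    ∃ g, x = 2 ^ k * g ∧ (Even g ↔ 2 ^ (k + 1) ∣ x) := by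
  obtain ⟨g, rfl⟩ := h
  refine ⟨g, rfl, ?_⟩
  rw [pow_succ, mul_dvd_mul_iff_left (by positivity), even_iff_two_dvd]

lemma two_pow_dvd_two_pow_mul_odd_iff {u : ℤ} (hu : Odd u) {k n : ℕ} :
    (2 : ℤ) ^ k ∣ 2 ^ n * u ↔ k ≤ n := by
  refine ⟨fun h => ?_, fun h => (pow_dvd_pow 2 h).mul_right u⟩
  by_contra! hlt
  have h' : (2 : ℤ) ^ n * 2 ∣ 2 ^ n * u := (pow_succ (2 : ℤ) n ▸ pow_dvd_pow 2 hlt).trans h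
  exact not_even_iff_odd.mpr hu
    (even_iff_two_dvd.mpr ((mul_dvd_mul_iff_left (by positivity)).mp h'))

lemma two_pow_add_three_dvd_pow_two_pow_sub_one (ha : Odd a) (k : ℕ) :
    (2 : ℤ) ^ (k + 3) ∣ a ^ 2 ^ (k + 1) - 1 := by
  induction k with
  | zero => simpa using eight_dvd_sq_sub_one_of_odd ha
  | succ k ih =>
    have h2 : (2 : ℤ) ∣ a ^ 2 ^ (k + 1) + 1 := ha.pow.add_one.two_dvd
    have hfac : a ^ 2 ^ (k + 1 + 1) - 1 = (a ^ 2 ^ (k + 1) - 1) * (a ^ 2 ^ (k + 1) + 1) := by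
      ring
    rw [hfac, pow_succ]
    exact mul_dvd_mul ih h2

lemma two_pow_padicValNat_add_two_dvd_pow_sub_one (ha : Odd a) (hm : Even m) (hm0 : m ≠ 0) :
    (2 : ℤ) ^ (padicValNat 2 m + 2) ∣ a ^ m - 1 := by
  obtain ⟨k, hk⟩ : ∃ k, padicValNat 2 m = k + 1 :=
    Nat.exists_eq_add_of_le' (one_le_padicValNat_of_dvd hm0 hm.two_dvd)
  rw [hk]
  exact (two_pow_add_three_dvd_pow_two_pow_sub_one ha k).trans
    (dvd_pow_sub_one_of_dvd (hk ▸ pow_padicValNat_dvd))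

lemma two_pow_padicValNat_add_one_dvd_pow_two_mul_sub_pow (hm : m ≠ 0) :
    (2 : ℤ) ^ (padicValNat 2 m + 1) ∣ a ^ (2 * m) - a ^ m := by
  rw [pow_two_mul_sub_pow_eq_mul_pow_sub_one]
  rcases even_or_odd a with ha | ha
  · exact ((pow_dvd_pow 2 (Nat.padicValNat_two_add_one_le hm)).trans
      (pow_dvd_pow_of_dvd ha.two_dvd m)).mul_right _
  refine Dvd.dvd.mul_left ?_ _
  rcases Nat.even_or_odd m with hme | hmo
  · exact (pow_dvd_pow 2 (by omega)).trans (two_pow_padicValNat_add_two_dvd_pow_sub_one ha hme hm)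
  · simpa [padicValNat.eq_zero_of_not_dvd hmo.not_two_dvd_nat] using
      (ha.pow.sub_odd odd_one).two_dvd

lemma two_pow_padicValNat_add_two_dvd_pow_two_mul_sub_pow_of_odd_of_even (ha : Odd a)
    (hm : Even m) (hm0 : m ≠ 0) :
    (2 : ℤ) ^ (padicValNat 2 m + 2) ∣ a ^ (2 * m) - a ^ m := by
  rw [pow_two_mul_sub_pow_eq_mul_pow_sub_one]
  exact (two_pow_padicValNat_add_two_dvd_pow_sub_one ha hm hm0).mul_left _

lemma four_dvd_pow_two_mul_sub_pow_iff (ha : Odd a) (hm : Odd m) :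
    4 ∣ a ^ (2 * m) - a ^ m ↔ a % 4 = 1 := by
  have hmod : ∀ c, a ≡ c [ZMOD 4] → a ^ (2 * m) - a ^ m ≡ c ^ (2 * m) - c ^ m [ZMOD 4] :=
    fun c h => (h.pow _).sub (h.pow _)
  rw [dvd_iff_emod_eq_zero]
  rcases (by rcases ha with ⟨k, rfl⟩; omega : a % 4 = 1 ∨ a % 4 = 3) with h | h
  · have := hmod 1 (by simp [Int.ModEq, h])
    simp only [one_pow, sub_self] at this
    exact iff_of_true this h
  · have := hmod (-1) (by simp [Int.ModEq, h])
    rw [(even_two_mul m).neg_one_pow, hm.neg_one_pow] at this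
    exact iff_of_false (by rw [this]; decide) (by omega)

lemma two_pow_padicValNat_add_two_dvd_of_emod_four_eq_zero_or_one (hm : m ≠ 0)
    (ha : a % 4 = 0 ∨ a % 4 = 1) : (2 : ℤ) ^ (padicValNat 2 m + 2) ∣ a ^ (2 * m) - a ^ m := by
  rcases ha with ha | ha
  · have h4 : (2 : ℤ) ^ (2 * m) ∣ a ^ m := by
      rw [pow_mul]; exact pow_dvd_pow_of_dvd (by norm_num; omega) m
    rw [pow_two_mul_sub_pow_eq_mul_pow_sub_one]
    exact ((pow_dvd_pow 2 (by have := Nat.padicValNat_two_add_one_le hm; omega)).trans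
      h4).mul_right _
  have hao : Odd a := odd_iff.mpr (by omega)
  rcases Nat.even_or_odd m with hme | hmo
  · exact two_pow_padicValNat_add_two_dvd_pow_two_mul_sub_pow_of_odd_of_even hao hme hm
  · simpa [padicValNat.eq_zero_of_not_dvd hmo.not_two_dvd_nat] using
      (four_dvd_pow_two_mul_sub_pow_iff hao hmo).mpr ha

lemma two_pow_padicValNat_add_two_dvd_iff_of_emod_four_eq_two (hm : m ≠ 0) (ha : a % 4 = 2) :
    (2 : ℤ) ^ (padicValNat 2 m + 2) ∣ a ^ (2 * m) - a ^ m ↔ ¬(m = 1 ∨ m = 2) := by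
  obtain ⟨u, rfl⟩ : ∃ u, a = 2 * u := ⟨a / 2, by omega⟩
  have hu : Odd u := odd_iff.mpr (by omega)
  have hX : (2 * u) ^ (2 * m) - (2 * u) ^ m = 2 ^ m * (u ^ m * ((2 * u) ^ m - 1)) := by
    rw [pow_two_mul_sub_pow_eq_mul_pow_sub_one, mul_pow, mul_assoc]
  have hodd : Odd ((2 * u) ^ m - 1) := ((even_two_mul u).pow_of_ne_zero hm).sub_odd odd_one
  rw [hX, two_pow_dvd_two_pow_mul_odd_iff (hu.pow.mul hodd),
    ← Nat.padicValNat_two_add_one_eq_iff hm]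
  have := Nat.padicValNat_two_add_one_le hm
  omega

lemma two_pow_padicValNat_add_two_dvd_iff_of_emod_four_eq_three (hm : m ≠ 0) (ha : a % 4 = 3) :
    (2 : ℤ) ^ (padicValNat 2 m + 2) ∣ a ^ (2 * m) - a ^ m ↔ Even m := by
  have hao : Odd a := odd_iff.mpr (by omega)
  rcases Nat.even_or_odd m with hme | hmo
  · exact iff_of_true
      (two_pow_padicValNat_add_two_dvd_pow_two_mul_sub_pow_of_odd_of_even hao hme hm) hme
  · rw [padicValNat.eq_zero_of_not_dvd hmo.not_two_dvd_nat,
      iff_false_intro (Nat.not_even_iff_odd.mpr hmo)]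
    simpa [ha] using four_dvd_pow_two_mul_sub_pow_iff hao hmo

end Int

theorem G_parity_rank_one (a : ℤ) (m : ℕ) (hm : 1 ≤ m) :
    ∃ g : ℤ, a ^ (2 * m) - a ^ m = 2 ^ (padicValNat 2 m + 1) * g ∧
      ((a % 4 = 0 ∨ a % 4 = 1) → Even g) ∧
      (a % 4 = 2 → (Odd g ↔ (m = 1 ∨ m = 2))) ∧
      (a % 4 = 3 → (Odd g ↔ Odd m)) := by
  have hm0 : m ≠ 0 := by omega
  obtain ⟨g, hX, hg⟩ := Int.exists_eq_two_pow_mul_and_even_iff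
    (Int.two_pow_padicValNat_add_one_dvd_pow_two_mul_sub_pow (a := a) hm0)
  refine ⟨g, hX, fun ha => hg.mpr ?_, fun ha => ?_, fun ha => ?_⟩
  · exact Int.two_pow_padicValNat_add_two_dvd_of_emod_four_eq_zero_or_one hm0 ha
  · rw [← Int.not_even_iff_odd, hg,
      Int.two_pow_padicValNat_add_two_dvd_iff_of_emod_four_eq_two hm0 ha, not_not]
  · rw [← Int.not_even_iff_odd, ← Nat.not_even_iff_odd, hg,
      Int.two_pow_padicValNat_add_two_dvd_iff_of_emod_four_eq_three hm0 ha]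
end

section
/- For every N ≥ 1 and every subset S₀ ⊆ {1,…,N}, there exists a unique descendible 2N-periodic function h : ℕ → ℤ/2ℤ such that {x ∈ {1,…,N} : h(x) = 1} = S₀. In other words, descendible 2N-periodic functions ℕ → ℤ/2ℤ are in bijection with subsets of {1,…,N}. -/
open Polynomial

/-- `h : ℕ → ℤ/2ℤ` is `2N`-periodic (on positive integers). -/
def IsPeriodicTwoN (N : ℕ) (h : ℕ → ZMod 2) : Prop :=
  ∀ x, 1 ≤ x → h (x + 2 * N) = h x

/-- The set `T` associated to a `2N`-periodic function `h`: even `x ∈ [1,2N]` such that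
`#{k : 1 ≤ k ≤ v₂(x), h(x/2^k) = 1}` is odd. -/
def Tset (N : ℕ) (h : ℕ → ZMod 2) : Set ℕ :=
  {x | 1 ≤ x ∧ x ≤ 2 * N ∧ Even x ∧
    Odd (((Finset.Icc 1 (padicValNat 2 x)).filter (fun k => h (x / 2 ^ k) = 1)).card)}

/-- `h` is a descendible `2N`-periodic function. -/
def IsDescendible (N : ℕ) (h : ℕ → ZMod 2) : Prop :=
  IsPeriodicTwoN N h ∧
  ∀ x, 1 ≤ x → x ≤ N →
    ((2 * x ∈ Tset N h ∧ N + x ∈ Tset N h) → ¬ h (N + x) = 1) ∧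
    ((2 * x ∈ Tset N h ∧ N + x ∉ Tset N h) → h (N + x) = 1) ∧
    ((2 * x ∉ Tset N h ∧ N + x ∈ Tset N h) → h (N + x) = 1) ∧
    ((2 * x ∉ Tset N h ∧ N + x ∉ Tset N h) → ¬ h (N + x) = 1)

/-- `ĥ(m) = Σ_{k=1}^{v₂(m)} h(m/2^k)`. -/
def hhat (h : ℕ → ZMod 2) (m : ℕ) : ZMod 2 :=
  ∑ k ∈ Finset.Icc 1 (padicValNat 2 m), h (m / 2 ^ k)

/-- `h` is an essentially descendible `2N`-periodic function. -/
def IsEssDescendible (N : ℕ) (h : ℕ → ZMod 2) : Prop :=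
  ∃ g : ℕ → ZMod 2, IsDescendible N g ∧
    (∀ i, 2 * N + 1 ≤ i → h i = g i) ∧
    ∀ m, 1 ≤ m →
      (∑ k ∈ (Finset.range (2 * N + 1)).filter (fun k => 2 ^ k * m ≤ 2 * N), h (2 ^ k * m))
        = ∑ k ∈ (Finset.range (2 * N + 1)).filter (fun k => 2 ^ k * m ≤ 2 * N), g (2 ^ k * m)

/-!
Write `T` for `Tset N h`. For `1 ≤ k ≤ v₂(x)` and `x ≤ 2N` the point `x / 2^k` lies in `[1, N]`,
so `T` only depends on `S₀`. The four descent rules say exactly that `h (N + x) = 1` iff exactly one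
of `2x`, `N + x` lies in `T`, so `S₀` also fixes `h` on `[N + 1, 2N]`, and periodicity fixes the
rest. Conversely these prescriptions, extended `2N`-periodically, define a descendible function.
-/

section Periodic

variable {α : Type*} {p : ℕ}

def periodicExtension (p : ℕ) (f : ℕ → α) (x : ℕ) : α :=
  f ((x - 1) % p + 1)

lemma periodicExtension_add (f : ℕ → α) {x : ℕ} (hx : 1 ≤ x) :
    periodicExtension p f (x + p) = periodicExtension p f x := by
  rw [periodicExtension, periodicExtension, show x + p - 1 = x - 1 + p by omega, Nat.add_mod_right]

lemma periodicExtension_of_mem_Icc (f : ℕ → α) {x : ℕ} (hx : x ∈ Set.Icc 1 p) :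
    periodicExtension p f x = f x := by
  obtain ⟨hx1, hxp⟩ := hx
  rw [periodicExtension, Nat.mod_eq_of_lt (by omega), Nat.sub_add_cancel hx1]

lemma apply_eq_apply_mod_add_one {f : ℕ → α} (hf : ∀ x, 1 ≤ x → f (x + p) = f x) {x : ℕ}
    (hx : 1 ≤ x) : f x = f ((x - 1) % p + 1) := by
  have hshift : Function.Periodic (fun y => f (y + 1)) p := fun y => by
    simpa only [Nat.add_right_comm] using hf (y + 1) le_add_self
  rw [hshift.map_mod_nat, Nat.sub_add_cancel hx]

lemma eqOn_Ici_of_periodic {f g : ℕ → α} (hp : 0 < p) (hf : ∀ x, 1 ≤ x → f (x + p) = f x)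
    (hg : ∀ x, 1 ≤ x → g (x + p) = g x) (hfg : Set.EqOn f g (Set.Icc 1 p)) :
    Set.EqOn f g (Set.Ici 1) := fun x hx => by
  rw [apply_eq_apply_mod_add_one hf hx, apply_eq_apply_mod_add_one hg hx]
  exact hfg ⟨le_add_self, Nat.succ_le_of_lt (Nat.mod_lt _ hp)⟩

end Periodic

lemma ZMod.two_eq_of_eq_one_iff {a b : ZMod 2} (h : a = 1 ↔ b = 1) : a = b := by
  revert a b
  decide

lemma div_two_pow_mem_Icc {N x k : ℕ} (hx : x ∈ Set.Icc 1 (2 * N))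
    (hk : k ∈ Finset.Icc 1 (padicValNat 2 x)) : x / 2 ^ k ∈ Set.Icc 1 N := by
  obtain ⟨hx1, hx2⟩ := hx
  obtain ⟨hk1, hk2⟩ := Finset.mem_Icc.mp hk
  have hdvd : 2 ^ k ∣ x := (pow_dvd_pow 2 hk2).trans pow_padicValNat_dvd
  refine ⟨Nat.div_pos (Nat.le_of_dvd hx1 hdvd) (by positivity), ?_⟩
  calc x / 2 ^ k ≤ x / 2 ^ 1 := Nat.div_le_div_left (Nat.pow_le_pow_right two_pos hk1) two_pos
    _ ≤ N := by omega

lemma Tset_congr {N : ℕ} {h h' : ℕ → ZMod 2} (hh' : Set.EqOn h h' (Set.Icc 1 N)) :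
    Tset N h = Tset N h' := by
  ext x
  simp only [Tset, Set.mem_ofPred_eq]
  refine and_congr_right fun hx1 => and_congr_right fun hx2 => and_congr_right fun _ => ?_
  rw [Finset.filter_congr fun k hk => by rw [hh' (div_two_pow_mem_Icc ⟨hx1, hx2⟩ hk)]]

lemma isDescendible_iff {N : ℕ} {h : ℕ → ZMod 2} :
    IsDescendible N h ↔ IsPeriodicTwoN N h ∧ ∀ x, 1 ≤ x → x ≤ N →
      (h (N + x) = 1 ↔ ¬(2 * x ∈ Tset N h ↔ N + x ∈ Tset N h)) := by
  refine and_congr_right fun _ => forall_congr' fun x => forall_congr' fun _ =>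
    forall_congr' fun _ => ?_
  tauto

lemma IsDescendible.eqOn {N : ℕ} (hN : 1 ≤ N) {h h' : ℕ → ZMod 2} (hd : IsDescendible N h)
    (hd' : IsDescendible N h') (hh' : Set.EqOn h h' (Set.Icc 1 N)) :
    Set.EqOn h h' (Set.Ici 1) := by
  obtain ⟨hper, hdesc⟩ := isDescendible_iff.mp hd
  obtain ⟨hper', hdesc'⟩ := isDescendible_iff.mp hd'
  refine eqOn_Ici_of_periodic (by omega) hper hper' fun x ⟨hx1, hx2⟩ => ?_
  rcases le_or_gt x N with hxN | hNx
  · exact hh' ⟨hx1, hxN⟩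
  · obtain ⟨y, rfl⟩ : ∃ y, x = N + y := ⟨x - N, by omega⟩
    refine ZMod.two_eq_of_eq_one_iff ?_
    rw [hdesc y (by omega) (by omega), hdesc' y (by omega) (by omega), Tset_congr hh']

open Classical in
noncomputable def descendibleExtension (N : ℕ) (g : ℕ → ZMod 2) : ℕ → ZMod 2 :=
  periodicExtension (2 * N) fun y =>
    if y ≤ N then g y else if (2 * (y - N) ∈ Tset N g ↔ y ∈ Tset N g) then 0 else 1

lemma descendibleExtension_eqOn (N : ℕ) (g : ℕ → ZMod 2) :
    Set.EqOn (descendibleExtension N g) g (Set.Icc 1 N) := fun x ⟨hx1, hxN⟩ => by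
  rw [descendibleExtension, periodicExtension_of_mem_Icc _ ⟨hx1, by omega⟩, if_pos hxN]

lemma isDescendible_descendibleExtension (N : ℕ) (g : ℕ → ZMod 2) :
    IsDescendible N (descendibleExtension N g) := by
  classical
  refine isDescendible_iff.mpr ⟨fun x hx => periodicExtension_add _ hx, fun x hx1 hxN => ?_⟩
  rw [Tset_congr (descendibleExtension_eqOn N g), descendibleExtension,
    periodicExtension_of_mem_Icc _ ⟨by omega, by omega⟩, if_neg (by omega),
    Nat.add_sub_cancel_left]
  split_ifs with hT <;> simp [hT]

theorem descendible_bijection_with_subsets_general (N : ℕ) (hN : 1 ≤ N)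
    (S₀ : Finset ℕ) :
    ∃ h : ℕ → ZMod 2,
      (IsDescendible N h ∧ ∀ x ∈ Finset.Icc 1 N, (h x = 1 ↔ x ∈ S₀)) ∧
      ∀ h' : ℕ → ZMod 2,
        (IsDescendible N h' ∧ ∀ x ∈ Finset.Icc 1 N, (h' x = 1 ↔ x ∈ S₀)) →
        ∀ x, 1 ≤ x → h' x = h x := by
  classical
  let g : ℕ → ZMod 2 := fun x => if x ∈ S₀ then 1 else 0
  have hg : ∀ x, g x = 1 ↔ x ∈ S₀ := fun x => by by_cases hx : x ∈ S₀ <;> simp [g, hx]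
  have hS : ∀ x ∈ Finset.Icc 1 N, descendibleExtension N g x = 1 ↔ x ∈ S₀ := fun x hx => by
    rw [descendibleExtension_eqOn N g (by simpa using hx), hg]
  refine ⟨descendibleExtension N g, ⟨isDescendible_descendibleExtension N g, hS⟩, ?_⟩
  rintro h' ⟨hd', hS'⟩ x hx
  refine hd'.eqOn hN (isDescendible_descendibleExtension N g) (fun y hy => ?_) hx
  have hy : y ∈ Finset.Icc 1 N := by simpa using hy
  exact ZMod.two_eq_of_eq_one_iff ((hS' y hy).trans (hS y hy).symm)

theorem descendible_bijection_with_subsets (N : ℕ) (hN : 1 ≤ N)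
    (S₀ : Finset ℕ) (hS₀ : S₀ ⊆ Finset.Icc 1 N) :
    ∃ h : ℕ → ZMod 2,
      (IsDescendible N h ∧ ∀ x ∈ Finset.Icc 1 N, (h x = 1 ↔ x ∈ S₀)) ∧
      ∀ h' : ℕ → ZMod 2,
        (IsDescendible N h' ∧ ∀ x ∈ Finset.Icc 1 N, (h' x = 1 ↔ x ∈ S₀)) →
        ∀ x, 1 ≤ x → h' x = h x :=
  descendible_bijection_with_subsets_general N hN S₀
end

section
/- Let N ≥ 1 and let h : ℕ → ℤ/2ℤ be a 2N-periodic function. Then the function ĥ, defined on even positive integers by ĥ(m) = Σ_{k=1}^{v₂(m)} h(m/2^k), satisfies ĥ(m + 2N) = ĥ(m) for all even m ≥ 2 if and only if h is descendible 2N-periodic. -/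
/-!
Since `ĥ(2x) = h(x) + ĥ(x)` and `ĥ` vanishes at odd arguments, periodicity of `ĥ` on even
numbers says `ĥ(2(N + x)) = ĥ(2x)` for all `x ≥ 1`. Reading `T` as `{y ∈ [1, 2N] : ĥ(y) = 1}`,
the four descendibility conditions at `x ∈ [1, N]` say exactly `ĥ(2(N + x)) = ĥ(2x)`, and the
`2N`-periodicity of `h` propagates this identity from `x ≤ N` to all `x`.
-/

open Polynomial

lemma ZMod.two_sum_eq_card_filter {ι : Type*} (s : Finset ι) (f : ι → ZMod 2) :
    ∑ i ∈ s, f i = ((s.filter (fun i => f i = 1)).card : ZMod 2) := by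
  rw [← Finset.sum_boole]
  exact Finset.sum_congr rfl fun i _ => by generalize f i = a; revert a; decide

lemma hhat_eq_sum_range (h : ℕ → ZMod 2) (m : ℕ) :
    hhat h m = ∑ k ∈ Finset.range (padicValNat 2 m), h (m / 2 ^ (k + 1)) := by
  rw [hhat, Finset.range_eq_Ico, Finset.sum_Ico_add' (fun k => h (m / 2 ^ k)), zero_add,
    Finset.Ico_add_one_right_eq_Icc]

lemma hhat_of_odd (h : ℕ → ZMod 2) {m : ℕ} (hm : Odd m) : hhat h m = 0 := by
  simp [hhat, padicValNat.eq_zero_of_not_dvd hm.not_two_dvd_nat]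

lemma hhat_two_mul (h : ℕ → ZMod 2) {x : ℕ} (hx : x ≠ 0) :
    hhat h (2 * x) = h x + hhat h x := by
  have hv : padicValNat 2 (2 * x) = padicValNat 2 x + 1 := by
    rw [padicValNat.mul two_ne_zero hx, padicValNat.self one_lt_two, add_comm]
  rw [hhat_eq_sum_range, hhat_eq_sum_range, hv, Finset.sum_range_succ']
  simp only [pow_succ', Nat.mul_div_mul_left _ _ two_pos, pow_zero, mul_one,
    Nat.mul_div_cancel_left _ two_pos]
  ring

lemma mem_Tset_iff (N : ℕ) (h : ℕ → ZMod 2) (y : ℕ) :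
    y ∈ Tset N h ↔ 1 ≤ y ∧ y ≤ 2 * N ∧ hhat h y = 1 := by
  have hodd : hhat h y = 1 ↔
      Odd ((Finset.Icc 1 (padicValNat 2 y)).filter (fun k => h (y / 2 ^ k) = 1)).card := by
    rw [hhat, ZMod.two_sum_eq_card_filter, ZMod.natCast_eq_one_iff_odd]
  have heven : hhat h y = 1 → Even y := fun h1 =>
    Nat.not_odd_iff_even.mp fun hy => by simp [hhat_of_odd h hy] at h1
  simp only [Tset, Set.mem_ofPred_eq, ← hodd]
  tauto

lemma descendible_condition_iff (N : ℕ) (h : ℕ → ZMod 2) {x : ℕ} (hx : 1 ≤ x) (hxN : x ≤ N) :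
    (((2 * x ∈ Tset N h ∧ N + x ∈ Tset N h) → ¬ h (N + x) = 1) ∧
     ((2 * x ∈ Tset N h ∧ N + x ∉ Tset N h) → h (N + x) = 1) ∧
     ((2 * x ∉ Tset N h ∧ N + x ∈ Tset N h) → h (N + x) = 1) ∧
     ((2 * x ∉ Tset N h ∧ N + x ∉ Tset N h) → ¬ h (N + x) = 1)) ↔
    hhat h (2 * (N + x)) = hhat h (2 * x) := by
  have h2x : 2 * x ∈ Tset N h ↔ hhat h (2 * x) = 1 := by
    rw [mem_Tset_iff, and_iff_right (by omega), and_iff_right (by omega)]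
  have hNx : N + x ∈ Tset N h ↔ hhat h (N + x) = 1 := by
    rw [mem_Tset_iff, and_iff_right (by omega), and_iff_right (by omega)]
  rw [h2x, hNx, hhat_two_mul h (by omega : N + x ≠ 0)]
  generalize hhat h (2 * x) = a, hhat h (N + x) = b, h (N + x) = c
  revert a b c
  decide

lemma hhat_even_periodic_iff (N : ℕ) (h : ℕ → ZMod 2) :
    (∀ m, 2 ≤ m → Even m → hhat h (m + 2 * N) = hhat h m) ↔
      ∀ x, 1 ≤ x → hhat h (2 * (N + x)) = hhat h (2 * x) := by
  refine ⟨fun H x hx => ?_, fun H m hm ⟨x, hmx⟩ => ?_⟩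
  · rw [mul_add, add_comm]
    exact H (2 * x) (by omega) (even_two_mul x)
  · obtain rfl : m = 2 * x := by omega
    rw [add_comm, ← mul_add]
    exact H x (by omega)

/-- For `x = N + y`, the `2N`-periodicity of `h` rewrites `ĥ(2(N + x)) = h(N + x) + ĥ(N + x)`
in terms of values at `y < x`, so strong induction applies. -/
lemma hhat_two_mul_add_eq_of_forall_le (N : ℕ) (h : ℕ → ZMod 2) (hper : IsPeriodicTwoN N h)
    (hbase : ∀ x, 1 ≤ x → x ≤ N → hhat h (2 * (N + x)) = hhat h (2 * x)) (x : ℕ) (hx : 1 ≤ x) :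
    hhat h (2 * (N + x)) = hhat h (2 * x) := by
  rcases Nat.eq_zero_or_pos N with rfl | hN
  · rw [zero_add]
  induction x using Nat.strong_induction_on with
  | _ x ih =>
    rcases le_or_gt x N with hxN | hNx
    · exact hbase x hx hxN
    obtain ⟨y, rfl⟩ : ∃ y, x = N + y := ⟨x - N, by omega⟩
    have hhat_shift : hhat h (y + 2 * N) = hhat h y := by
      rcases Nat.even_or_odd y with ⟨z, rfl⟩ | hodd
      · rw [← two_mul, ← mul_add, add_comm z, ih z (by omega) (by omega)]
      · rw [hhat_of_odd h hodd, hhat_of_odd h (hodd.add_even (even_two_mul N))]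
    calc hhat h (2 * (N + (N + y)))
        = h (y + 2 * N) + hhat h (y + 2 * N) := by
          rw [hhat_two_mul h (by omega)]; congr 2 <;> ring
      _ = hhat h (2 * y) := by
          rw [hper y (by omega), hhat_shift, hhat_two_mul h (x := y) (by omega)]
      _ = hhat h (2 * (N + y)) := (ih y (by omega) (by omega)).symm

theorem hhat_periodic_iff_descendible_general (N : ℕ)
    (h : ℕ → ZMod 2) (hper : IsPeriodicTwoN N h) :
    (∀ m, 2 ≤ m → Even m → hhat h (m + 2 * N) = hhat h m) ↔ IsDescendible N h := by
  rw [hhat_even_periodic_iff]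
  constructor
  · exact fun H => ⟨hper, fun x hx hxN => (descendible_condition_iff N h hx hxN).mpr (H x hx)⟩
  · rintro ⟨-, hdesc⟩
    exact hhat_two_mul_add_eq_of_forall_le N h hper fun x hx hxN =>
      (descendible_condition_iff N h hx hxN).mp (hdesc x hx hxN)

theorem hhat_periodic_iff_descendible (N : ℕ) (hN : 1 ≤ N)
    (h : ℕ → ZMod 2) (hper : IsPeriodicTwoN N h) :
    (∀ m, 2 ≤ m → Even m → hhat h (m + 2 * N) = hhat h m) ↔ IsDescendible N h :=
  hhat_periodic_iff_descendible_general N h hper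
end

section
/- Let K be a finite field extension of the 2-adic numbers ℚ₂, and let β ∈ K be integral over the ring ℤ₂ of 2-adic integers. Then the trace Tr_{K/ℚ₂}(β + β²) lies in 2ℤ₂, i.e., there exists c ∈ ℤ₂ with Tr_{K/ℚ₂}(β + β²) = 2c. -/
open Polynomial

/-- Square of a finite sum of elements of a subalgebra: the cross terms are
`2 *` an element of the subalgebra. -/
lemma sq_sum_eq_sum_sq_add_two_mul {R S ι : Type*} [CommRing R] [CommRing S] [Algebra R S]
    (A : Subalgebra R S) (s : Finset ι) (f : ι → S) (hf : ∀ i ∈ s, f i ∈ A) :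
    ∃ T ∈ A, (∑ i ∈ s, f i) ^ 2 = ∑ i ∈ s, f i ^ 2 + 2 * T := by
  classical
  induction s using Finset.cons_induction with
  | empty => exact ⟨0, A.zero_mem, by simp⟩
  | cons a s ha ih =>
    obtain ⟨T, hT, hTeq⟩ := ih (fun i hi => hf i (Finset.mem_cons_of_mem hi))
    refine ⟨f a * ∑ i ∈ s, f i + T, A.add_mem (A.mul_mem (hf a (Finset.mem_cons_self a s))
      (A.sum_mem fun i hi => hf i (Finset.mem_cons_of_mem hi))) hT, ?_⟩
    rw [Finset.sum_cons, Finset.sum_cons, add_sq, hTeq]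
    ring

theorem trace_self_add_sq_mem_two_padicInt
    (K : Type*) [Field K] [Algebra ℚ_[2] K] [FiniteDimensional ℚ_[2] K]
    (β : K) (q : Polynomial ℤ_[2]) (hq : q.Monic)
    (hβ : Polynomial.eval₂ ((algebraMap ℚ_[2] K).comp (algebraMap ℤ_[2] ℚ_[2])) β q = 0) :
    ∃ c : ℤ_[2], Algebra.trace ℚ_[2] K (β + β ^ 2) = 2 * (algebraMap ℤ_[2] ℚ_[2] c) := by
  classical
  letI : Algebra ℤ_[2] K := ((algebraMap ℚ_[2] K).comp (algebraMap ℤ_[2] ℚ_[2])).toAlgebra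
  haveI : IsScalarTower ℤ_[2] ℚ_[2] K := IsScalarTower.of_algebraMap_eq' rfl
  set E := AlgebraicClosure ℚ_[2]
  have hint : IsIntegral ℤ_[2] β := ⟨q, hq, hβ⟩
  -- the traces are integral
  set t : ℚ_[2] := Algebra.trace ℚ_[2] K β with ht_def
  set s : ℚ_[2] := Algebra.trace ℚ_[2] K (β ^ 2) with hs_def
  have ht_int : IsIntegral ℤ_[2] t := Algebra.isIntegral_trace hint
  have hs_int : IsIntegral ℤ_[2] s := Algebra.isIntegral_trace (hint.pow 2)
  obtain ⟨a, ha⟩ := IsIntegrallyClosed.isIntegral_iff.mp ht_int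
  -- over the algebraic closure, `t ^ 2 - s = 2 * (integral)`
  have hemb_t : algebraMap ℚ_[2] E t = ∑ σ : K →ₐ[ℚ_[2]] E, σ β :=
    trace_eq_sum_embeddings E
  have hemb_s : algebraMap ℚ_[2] E s = ∑ σ : K →ₐ[ℚ_[2]] E, (σ β) ^ 2 := by
    rw [hs_def, trace_eq_sum_embeddings E]
    simp [map_pow]
  obtain ⟨T, hT, hTeq⟩ := sq_sum_eq_sum_sq_add_two_mul (integralClosure ℤ_[2] E)
    Finset.univ (fun σ : K →ₐ[ℚ_[2]] E => σ β)
    (fun σ _ => hint.map (σ.restrictScalars ℤ_[2]))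
  have key : algebraMap ℚ_[2] E (t ^ 2 - s) = 2 * T := by
    rw [map_sub, map_pow, hemb_t, hemb_s, hTeq]; ring
  have hhalf : IsIntegral ℤ_[2] ((t ^ 2 - s) / 2) := by
    rw [← isIntegral_algebraMap_iff (algebraMap ℚ_[2] E).injective]
    have : algebraMap ℚ_[2] E ((t ^ 2 - s) / 2) = T := by
      rw [map_div₀, key, map_ofNat]
      exact mul_div_cancel_left₀ T two_ne_zero
    rw [this]; exact hT
  obtain ⟨d, hd⟩ := IsIntegrallyClosed.isIntegral_iff.mp hhalf
  have hd' : t ^ 2 - s = 2 * algebraMap ℤ_[2] ℚ_[2] d := by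
    rw [eq_div_iff (two_ne_zero (α := ℚ_[2]))] at hd
    rw [← hd]; ring
  -- `a + a ^ 2` is even in `ℤ_[2]`
  have hpar : (2 : ℤ_[2]) ∣ a + a ^ 2 := by
    have hker : a + a ^ 2 ∈ RingHom.ker (PadicInt.toZMod : ℤ_[2] →+* ZMod 2) := by
      have h0 : ∀ x : ZMod 2, x + x ^ 2 = 0 := by decide
      rw [RingHom.mem_ker, map_add, map_pow]
      exact h0 _
    rw [PadicInt.ker_toZMod, PadicInt.maximalIdeal_eq_span_p, Ideal.mem_span_singleton] at hker
    exact_mod_cast hker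
  obtain ⟨e, he⟩ := hpar
  refine ⟨e - d, ?_⟩
  have htr : Algebra.trace ℚ_[2] K (β + β ^ 2) = t + s := map_add _ _ _
  have hta : t = algebraMap ℤ_[2] ℚ_[2] a := ha.symm
  have hsum : t + t ^ 2 = 2 * algebraMap ℤ_[2] ℚ_[2] e := by
    rw [hta, ← map_pow, ← map_add, he, map_mul, map_ofNat]
  rw [htr, map_sub]
  have : t + s = (t + t ^ 2) - (t ^ 2 - s) := by ring
  rw [this, hsum, hd']
  ring
end
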